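/- arXiv:1603.05512 — 11 statements merged into one kernel-verified Lean document; each statement's English description precedes it below -/
import Mathlib

section
/- Let n ∈ ℕ, 0 < q < 1, and v₁, …, vₙ ∈ ℂ. Then the n×n complex matrix whose (j,k) entry is θ₃(v_j − conj(v_k), q) = ∑_{ℓ∈ℤ} q^{ℓ²} e^{2πiℓ(v_j − conj(v_k))} is positive semidefinite. -/
/-!
Writing `e_ℓ(v) = exp(2πiℓv)`, one has `e_ℓ(v - conj u) = e_ℓ(v) * conj (e_ℓ(u))`, so the theta matrix
is the convergent sum over `ℓ ∈ ℤ` of the rank-one positive semidefinite matrices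
`q^{ℓ²} (e_ℓ(v_j) conj(e_ℓ(v_k)))_{j,k}`, and its quadratic form at `c` is
`∑_ℓ q^{ℓ²} |∑_j c_j e_ℓ(v_j)|² ≥ 0`.
-/

open Complex ComplexOrder

noncomputable def jacobiTheta3 (v : ℂ) (q : ℝ) : ℂ :=
  ∑' l : ℤ, (q : ℂ) ^ (l ^ 2) * Complex.exp (2 * Real.pi * Complex.I * l * v)

open ComplexConjugate

lemma sum_sum_mul_conj_mul_conj_eq_normSq {ι : Type*} [Fintype ι] (f c : ι → ℂ) :
    ∑ j, ∑ k, f j * conj (f k) * c j * conj (c k) = normSq (∑ j, c j * f j) := by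
  rw [← mul_conj, map_sum, Finset.sum_mul]
  refine Finset.sum_congr rfl fun j _ => ?_
  rw [Finset.mul_sum]
  refine Finset.sum_congr rfl fun k _ => ?_
  rw [map_mul]
  ring

theorem sum_sum_tsum_weighted_rankOne_nonneg {α ι : Type*} [Fintype ι] {w : α → ℝ}
    (hw : ∀ a, 0 ≤ w a) (f : α → ι → ℂ)
    (hf : ∀ j k, Summable fun a => (w a : ℂ) * (f a j * conj (f a k))) (c : ι → ℂ) :
    0 ≤ ∑ j, ∑ k, (∑' a, (w a : ℂ) * (f a j * conj (f a k))) * c j * conj (c k) := by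
  have hswap : ∑ j, ∑ k, (∑' a, (w a : ℂ) * (f a j * conj (f a k))) * c j * conj (c k) =
      ∑' a, ∑ j, ∑ k, (w a : ℂ) * (f a j * conj (f a k)) * c j * conj (c k) := by
    have hjk : ∀ j k, Summable fun a => (w a : ℂ) * (f a j * conj (f a k)) * c j * conj (c k) :=
      fun j k => ((hf j k).mul_right _).mul_right _
    rw [Summable.tsum_finsetSum fun j _ => summable_sum fun k _ => hjk j k]
    refine Finset.sum_congr rfl fun j _ => ?_
    rw [Summable.tsum_finsetSum fun k _ => hjk j k]
    simp only [tsum_mul_right]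
  rw [hswap]
  refine tsum_nonneg fun a => ?_
  have hterm : ∑ j, ∑ k, (w a : ℂ) * (f a j * conj (f a k)) * c j * conj (c k) =
      (w a : ℂ) * normSq (∑ j, c j * f a j) := by
    rw [← sum_sum_mul_conj_mul_conj_eq_normSq, Finset.mul_sum]
    simp only [Finset.mul_sum, mul_assoc]
  rw [hterm]
  exact mul_nonneg (zero_le_real.mpr (hw a)) (zero_le_real.mpr (normSq_nonneg _))

lemma exp_two_pi_I_mul_sub_conj (l : ℤ) (v u : ℂ) :
    exp (2 * Real.pi * I * l * (v - conj u)) =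
      exp (2 * Real.pi * I * l * v) * conj (exp (2 * Real.pi * I * l * u)) := by
  rw [← exp_conj, ← exp_add]
  congr 1
  simp only [map_mul, conj_I, conj_ofReal, map_ofNat, map_intCast]
  ring

lemma summable_zpow_sq_mul_exp {q : ℝ} (hq0 : 0 < q) (hq1 : q < 1) (w : ℂ) :
    Summable fun l : ℤ => (q : ℂ) ^ (l ^ 2) * exp (2 * Real.pi * I * l * w) := by
  -- `q = exp(πiτ)` with `τ = -i log q / π` in the upper half plane.
  set τ : ℂ := Real.log q * I⁻¹ / Real.pi
  have hτ : 0 < τ.im := by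
    have : τ = ((-Real.log q / Real.pi : ℝ) : ℂ) * I := by
      simp only [τ, inv_I]
      push_cast
      field_simp
    rw [this, mul_I_im, ofReal_re]
    exact div_pos (neg_pos.mpr (Real.log_neg hq0 hq1)) Real.pi_pos
  refine ((summable_jacobiTheta₂_term_iff w τ).mpr hτ).congr fun l => ?_
  rw [jacobiTheta₂_term, exp_add, mul_comm]
  congr 1
  have : (Real.pi : ℂ) * I * l ^ 2 * τ = ((l ^ 2 : ℤ) : ℂ) * (Real.log q : ℂ) := by
    simp only [τ]
    push_cast
    field_simp
  rw [this, exp_int_mul, ← ofReal_exp, Real.exp_log hq0]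

/-- For `n ∈ ℕ`, `0 < q < 1` and `v₁, …, vₙ ∈ ℂ`, the matrix
`(θ₃(v_j - conj v_k, q))_{j,k}` is positive semidefinite: for every `c ∈ ℂⁿ`
the quadratic form `∑_{j,k} θ₃(v_j - conj v_k, q) c_j conj c_k` is a
nonnegative real number. -/
theorem theta3_matrix_posSemidef (n : ℕ) (q : ℝ) (hq0 : 0 < q) (hq1 : q < 1)
    (v : Fin n → ℂ) :
    ∀ c : Fin n → ℂ,
      0 ≤ ∑ j : Fin n, ∑ k : Fin n,
        jacobiTheta3 (v j - (starRingEnd ℂ) (v k)) q * c j * (starRingEnd ℂ) (c k) := by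
  intro c
  set e : ℤ → Fin n → ℂ := fun l j => exp (2 * Real.pi * I * l * v j)
  have hterm : ∀ (j k : Fin n) (l : ℤ),
      (q : ℂ) ^ (l ^ 2) * exp (2 * Real.pi * I * l * (v j - conj (v k))) =
        ((q ^ (l ^ 2) : ℝ) : ℂ) * (e l j * conj (e l k)) := fun j k l => by
    rw [exp_two_pi_I_mul_sub_conj, ofReal_zpow]
  have htheta : ∀ j k : Fin n, jacobiTheta3 (v j - conj (v k)) q =
      ∑' l : ℤ, ((q ^ (l ^ 2) : ℝ) : ℂ) * (e l j * conj (e l k)) := fun j k => by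
    simp only [jacobiTheta3, hterm]
  simp only [htheta]
  refine sum_sum_tsum_weighted_rankOne_nonneg (fun l => zpow_nonneg hq0.le _) e
    (fun j k => ?_) c
  simpa only [hterm] using summable_zpow_sq_mul_exp hq0 hq1 (v j - conj (v k))
end

section
/- Let m, n ∈ ℕ, let 0 < q_ℓ < 1 for 1 ≤ ℓ ≤ m, and let v_{j,ℓ} ∈ ℂ for 1 ≤ j ≤ n, 1 ≤ ℓ ≤ m. Then the n×n complex matrix whose (j,k) entry is ∏_{ℓ=1}^{m} θ₃(v_{j,ℓ} − conj(v_{k,ℓ}), q_ℓ), where θ₃(v, q) = ∑_{ℓ∈ℤ} q^{ℓ²} e^{2πiℓv}, is positive semidefinite. -/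
open Complex ComplexOrder

lemma theta_term_summable (w : ℂ) {q : ℝ} (hq0 : 0 < q) (hq1 : q < 1) :
    Summable (fun i : ℤ => (q : ℂ) ^ (i ^ 2) * Complex.exp (2 * Real.pi * Complex.I * i * w)) := by
  set τ : ℂ := ((-Real.log q / Real.pi : ℝ) : ℂ) * Complex.I with hτdef
  have hτ : 0 < τ.im := by
    simp only [hτdef, Complex.mul_im, Complex.ofReal_re, Complex.I_im, Complex.ofReal_im,
      Complex.I_re, mul_one, mul_zero, add_zero]
    have hlog := Real.log_neg hq0 hq1
    have hpi := Real.pi_pos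
    have : 0 < -Real.log q := by linarith
    positivity
  have h := (summable_jacobiTheta₂_term_iff w τ).mpr hτ
  refine (summable_congr fun i => ?_).mpr h
  unfold jacobiTheta₂_term
  rw [Complex.exp_add, mul_comm]
  congr 1
  have hπ : (Real.pi : ℂ) ≠ 0 := by exact_mod_cast Real.pi_ne_zero
  have harg : (Real.pi : ℂ) * Complex.I * (i : ℂ) ^ 2 * τ = ((i ^ 2 : ℤ) : ℂ) * (Real.log q : ℂ) := by
    rw [hτdef]
    push_cast
    field_simp
    ring_nf
    rw [Complex.I_sq]
    ring
  rw [harg, Complex.exp_int_mul, ← Complex.ofReal_exp, Real.exp_log hq0]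

lemma exp_split (i : ℤ) (a b : ℂ) :
    Complex.exp (2 * Real.pi * Complex.I * i * (a - (starRingEnd ℂ) b))
      = Complex.exp (2 * Real.pi * Complex.I * i * a)
        * (starRingEnd ℂ) (Complex.exp (2 * Real.pi * Complex.I * i * b)) := by
  rw [← Complex.exp_conj, ← Complex.exp_add]
  congr 1
  have : (starRingEnd ℂ) (2 * (Real.pi : ℂ) * Complex.I * (i : ℂ) * b)
      = 2 * (Real.pi : ℂ) * (-Complex.I) * (i : ℂ) * (starRingEnd ℂ) b := by
    simp [map_mul, Complex.conj_I, Complex.conj_ofReal, map_ofNat]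
  rw [this]; ring

lemma key (n : ℕ) : ∀ (m : ℕ) (q : Fin m → ℝ), (∀ l, 0 < q l) → (∀ l, q l < 1) →
    ∀ (v : Fin n → Fin m → ℂ) (c : Fin n → ℂ),
      0 ≤ ∑ j : Fin n, ∑ k : Fin n,
        (∏ l : Fin m, jacobiTheta3 (v j l - (starRingEnd ℂ) (v k l)) (q l))
          * c j * (starRingEnd ℂ) (c k) := by
  intro m
  induction m with
  | zero =>
    intro q hq0 hq1 v c
    simp only [Finset.univ_eq_empty, Finset.prod_empty, one_mul]
    have : ∑ j : Fin n, ∑ k : Fin n, c j * (starRingEnd ℂ) (c k)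
        = (∑ j : Fin n, c j) * (starRingEnd ℂ) (∑ k : Fin n, c k) := by
      rw [map_sum, Finset.sum_mul_sum]
    rw [this]
    exact mul_star_self_nonneg _
  | succ m IH =>
    intro q hq0 hq1 v c
    set L := Fin.last m with hL
    set E : ℤ → Fin n → ℂ := fun i j => Complex.exp (2 * Real.pi * Complex.I * i * v j L) with hE
    set P : Fin n → Fin n → ℂ := fun j k =>
      ∏ l : Fin m, jacobiTheta3 (v j l.castSucc - (starRingEnd ℂ) (v k l.castSucc)) (q l.castSucc)
      with hP
    set t : ℤ → Fin n → Fin n → ℂ := fun i j k =>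
      (q L : ℂ) ^ (i ^ 2) * Complex.exp (2 * Real.pi * Complex.I * i * (v j L - (starRingEnd ℂ) (v k L)))
      with ht
    have hsum : ∀ j k, Summable (fun i : ℤ => t i j k) :=
      fun j k => theta_term_summable _ (hq0 L) (hq1 L)
    have step1 : ∑ j : Fin n, ∑ k : Fin n,
        (∏ l : Fin (m+1), jacobiTheta3 (v j l - (starRingEnd ℂ) (v k l)) (q l))
          * c j * (starRingEnd ℂ) (c k)
        = ∑ j : Fin n, ∑ k : Fin n, ∑' i : ℤ, t i j k * (P j k * c j * (starRingEnd ℂ) (c k)) := by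
      refine Finset.sum_congr rfl fun j _ => Finset.sum_congr rfl fun k _ => ?_
      rw [Fin.prod_univ_castSucc]
      have : jacobiTheta3 (v j L - (starRingEnd ℂ) (v k L)) (q L) = ∑' i : ℤ, t i j k := rfl
      have h2 : ((∏ l : Fin m, jacobiTheta3 (v j l.castSucc - (starRingEnd ℂ) (v k l.castSucc))
              (q l.castSucc)) * ∑' i : ℤ, t i j k) * c j * (starRingEnd ℂ) (c k)
          = (∑' i : ℤ, t i j k) * (P j k * c j * (starRingEnd ℂ) (c k)) := by
        rw [hP]; ring
      rw [this, h2, ← tsum_mul_right]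
    rw [step1]
    have step2 : ∑ j : Fin n, ∑ k : Fin n, ∑' i : ℤ, t i j k * (P j k * c j * (starRingEnd ℂ) (c k))
        = ∑' i : ℤ, ∑ j : Fin n, ∑ k : Fin n, t i j k * (P j k * c j * (starRingEnd ℂ) (c k)) := by
      rw [eq_comm]
      rw [Summable.tsum_finsetSum (fun j _ => ?_)]
      · exact Finset.sum_congr rfl fun j _ => (Summable.tsum_finsetSum (fun k _ => (hsum j k).mul_right _))
      · exact summable_sum fun k _ => (hsum j k).mul_right _
    rw [step2]
    refine tsum_nonneg fun i => ?_
    have step3 : ∑ j : Fin n, ∑ k : Fin n, t i j k * (P j k * c j * (starRingEnd ℂ) (c k))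
        = ((q L ^ (i ^ 2) : ℝ) : ℂ) * ∑ j : Fin n, ∑ k : Fin n,
            P j k * (c j * E i j) * (starRingEnd ℂ) (c k * E i k) := by
      rw [Finset.mul_sum]
      refine Finset.sum_congr rfl fun j _ => ?_
      rw [Finset.mul_sum]
      refine Finset.sum_congr rfl fun k _ => ?_
      rw [ht]
      simp only
      rw [exp_split, Complex.ofReal_zpow, map_mul]
      ring
    rw [step3]
    refine mul_nonneg ?_ ?_
    · norm_cast
      exact zpow_nonneg (hq0 L).le _
    · exact IH (fun l => q l.castSucc) (fun l => hq0 _) (fun l => hq1 _)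
        (fun j l => v j l.castSucc) (fun j => c j * E i j)

/-- For `m, n ∈ ℕ`, `0 < q_ℓ < 1` and `v_{j,ℓ} ∈ ℂ`, the matrix with `(j,k)` entry
`∏_{ℓ=1}^m θ₃(v_{j,ℓ} - conj v_{k,ℓ}, q_ℓ)` is positive semidefinite. -/
theorem theta3_product_matrix_posSemidef (m n : ℕ) (q : Fin m → ℝ)
    (hq0 : ∀ l, 0 < q l) (hq1 : ∀ l, q l < 1) (v : Fin n → Fin m → ℂ) :
    ∀ c : Fin n → ℂ,
      0 ≤ ∑ j : Fin n, ∑ k : Fin n,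
        (∏ l : Fin m, jacobiTheta3 (v j l - (starRingEnd ℂ) (v k l)) (q l))
          * c j * (starRingEnd ℂ) (c k) := by
  intro c
  exact key n m q hq0 hq1 v c
end

section
/- Let n ∈ ℕ and let s₁, …, sₙ ∈ ℂ with Re(s_j) > 0 for each j, and assume s_j + conj(s_k) ≠ 1 for all j, k. Then the n×n complex matrix whose (j,k) entry is 1/(s_j + conj(s_k) − 1) − ζ(s_j + conj(s_k))/(s_j + conj(s_k)) is positive semidefinite, where ζ is the Riemann zeta function. -/
/-!
For `0 < Re z`, `z ≠ 1`, the entry `1/(z-1) - ζ(z)/z` is `∫₁^∞ {t} t^(-z-1) dt`, the Mellin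
transform of `{t} · 1_{t > 1}` at `-z`. For `Re z > 1` this follows from Abel summation,
`ζ(z) = z ∫₁^∞ ⌊t⌋ t^(-z-1) dt`; on the whole half-plane `Re z > 0` both sides are holomorphic
once `1/(z-1) - ζ(z)/z` is written as `(1 - ζ₀(z))/z` with `ζ(z) = 1/(z-1) + ζ₀(z)`, `ζ₀` entire,
so the identity extends by analytic continuation.
For `z = s_j + conj s_k` the kernel factors as `t^(-z-1) = t⁻¹ · t^(-s_j) · conj (t^(-s_k))`,
so the quadratic form equals `∫₁^∞ {t}/t · |∑ c_j t^(-s_j)|² dt ≥ 0`.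
-/

open Complex ComplexOrder ComplexConjugate MeasureTheory Set Filter Asymptotics Topology

theorem sum_sum_integral_mul_conj_mul_nonneg {ι X : Type*} [Fintype ι] [MeasurableSpace X]
    {μ : Measure X} {w : X → ℝ} (hw : 0 ≤ᵐ[μ] w) {f : ι → X → ℂ}
    (hf : ∀ j k, Integrable (fun x ↦ (w x : ℂ) * (f j x * conj (f k x))) μ) (c : ι → ℂ) :
    0 ≤ ∑ j, ∑ k, (∫ x, (w x : ℂ) * (f j x * conj (f k x)) ∂μ) * c j * conj (c k) := by
  have hpoint : ∀ x, ∑ j, ∑ k, (w x : ℂ) * (f j x * conj (f k x)) * c j * conj (c k) =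
      ((w x * normSq (∑ j, c j * f j x) : ℝ) : ℂ) := by
    intro x
    rw [ofReal_mul, ← mul_conj, map_sum, Finset.sum_mul_sum, Finset.mul_sum]
    refine Finset.sum_congr rfl fun j _ ↦ ?_
    rw [Finset.mul_sum]
    refine Finset.sum_congr rfl fun k _ ↦ ?_
    simp only [map_mul]
    ring
  calc (0 : ℂ) ≤ ((∫ x, w x * normSq (∑ j, c j * f j x) ∂μ : ℝ) : ℂ) := by
        exact_mod_cast integral_nonneg_of_ae <| hw.mono fun x hx ↦
          mul_nonneg hx (normSq_nonneg _)
    _ = ∫ x, ∑ j, ∑ k, (w x : ℂ) * (f j x * conj (f k x)) * c j * conj (c k) ∂μ := by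
        rw [← integral_complex_ofReal]
        exact integral_congr_ae (Eventually.of_forall fun x ↦ (hpoint x).symm)
    _ = _ := by
        rw [integral_finsetSum _ fun j _ ↦ integrable_finsetSum _ fun k _ ↦
          ((hf j k).mul_const _).mul_const _]
        refine Finset.sum_congr rfl fun j _ ↦ ?_
        rw [integral_finsetSum _ fun k _ ↦ ((hf j k).mul_const _).mul_const _]
        simp_rw [integral_mul_const]

noncomputable def fractIoiOne : ℝ → ℝ := (Ioi 1).indicator Int.fract

theorem fractIoiOne_nonneg (t : ℝ) : 0 ≤ fractIoiOne t :=
  indicator_nonneg (fun t _ ↦ Int.fract_nonneg t) t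

theorem fractIoiOne_le_one (t : ℝ) : fractIoiOne t ≤ 1 :=
  indicator_apply_le' (fun _ ↦ (Int.fract_lt_one t).le) fun _ ↦ zero_le_one

theorem measurable_fractIoiOne : Measurable fractIoiOne :=
  measurable_fract.indicator measurableSet_Ioi

theorem norm_ofReal_fractIoiOne_le_one (t : ℝ) : ‖(fractIoiOne t : ℂ)‖ ≤ 1 := by
  rw [norm_real, Real.norm_of_nonneg (fractIoiOne_nonneg t)]
  exact fractIoiOne_le_one t

theorem locallyIntegrable_ofReal_fractIoiOne :
    LocallyIntegrable (fun t ↦ (fractIoiOne t : ℂ)) :=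
  (locallyIntegrable_const (1 : ℂ)).mono
    (measurable_ofReal.comp measurable_fractIoiOne).aestronglyMeasurable
    (Eventually.of_forall fun t ↦ by simpa using norm_ofReal_fractIoiOne_le_one t)

theorem ofReal_fractIoiOne_isBigO_atTop :
    (fun t ↦ (fractIoiOne t : ℂ)) =O[atTop] (· ^ (-0 : ℝ)) :=
  IsBigO.of_bound 1 <| Eventually.of_forall fun t ↦ by
    simpa using norm_ofReal_fractIoiOne_le_one t

theorem ofReal_fractIoiOne_isBigO_nhdsGT_zero (b : ℝ) :
    (fun t ↦ (fractIoiOne t : ℂ)) =O[𝓝[>] 0] (· ^ (-b)) := by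
  refine EventuallyEq.trans_isBigO ?_ (isBigO_zero _ _)
  filter_upwards [Ioo_mem_nhdsGT zero_lt_one] with t ht
  simp [fractIoiOne, indicator_of_notMem (notMem_Ioi.mpr ht.2.le)]

theorem mellinConvergent_ofReal_fractIoiOne {s : ℂ} (hs : s.re < 0) :
    MellinConvergent (fun t ↦ (fractIoiOne t : ℂ)) s :=
  mellinConvergent_of_isBigO_rpow (locallyIntegrable_ofReal_fractIoiOne.locallyIntegrableOn _)
    ofReal_fractIoiOne_isBigO_atTop hs (ofReal_fractIoiOne_isBigO_nhdsGT_zero (s.re - 1))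
    (sub_one_lt _)

theorem differentiableAt_mellin_ofReal_fractIoiOne {s : ℂ} (hs : s.re < 0) :
    DifferentiableAt ℂ (mellin fun t ↦ (fractIoiOne t : ℂ)) s :=
  mellin_differentiableAt_of_isBigO_rpow
    (locallyIntegrable_ofReal_fractIoiOne.locallyIntegrableOn _)
    ofReal_fractIoiOne_isBigO_atTop hs (ofReal_fractIoiOne_isBigO_nhdsGT_zero (s.re - 1))
    (sub_one_lt _)

theorem cpow_smul_ofReal_fractIoiOne (s : ℂ) (t : ℝ) :
    (t : ℂ) ^ s • (fractIoiOne t : ℂ) =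
      (Ioi 1).indicator (fun t : ℝ ↦ (t : ℂ) ^ s * Int.fract t) t := by
  by_cases ht : t ∈ Ioi 1 <;> simp [fractIoiOne, ht]

theorem mellin_ofReal_fractIoiOne (s : ℂ) :
    mellin (fun t ↦ (fractIoiOne t : ℂ)) s =
      ∫ t in Ioi (1 : ℝ), (t : ℂ) ^ (s - 1) * Int.fract t := by
  simp_rw [mellin, cpow_smul_ofReal_fractIoiOne]
  rw [setIntegral_indicator measurableSet_Ioi, Ioi_inter_Ioi, sup_of_le_right zero_le_one]

theorem riemannZeta_eq_mul_integral_floor {s : ℂ} (hs : 1 < s.re) :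
    riemannZeta s = s * ∫ t in Ioi (1 : ℝ), (⌊t⌋₊ : ℂ) * (t : ℂ) ^ (-(s + 1)) := by
  have hO : (fun n : ℕ ↦ ∑ k ∈ Finset.Icc 1 n, ‖(1 : ℕ → ℂ) k‖) =O[atTop]
      fun n : ℕ ↦ (n : ℝ) ^ (1 : ℝ) := by
    simp only [Pi.one_apply, norm_one, Finset.sum_const, Nat.card_Icc, add_tsub_cancel_right,
      nsmul_eq_mul, mul_one, Real.rpow_one]
    exact isBigO_refl _ _
  rw [← LSeries_one_eq_riemannZeta hs, LSeries_eq_mul_integral' 1 zero_le_one hs hO]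
  simp

theorem mellin_ofReal_fractIoiOne_neg_of_one_lt_re {s : ℂ} (hs : 1 < s.re) :
    mellin (fun t ↦ (fractIoiOne t : ℂ)) (-s) = 1 / (s - 1) - riemannZeta s / s := by
  have hs0 : s ≠ 0 := by rintro rfl; simp at hs; linarith
  have hfract : IntegrableOn (fun t : ℝ ↦ (t : ℂ) ^ (-s - 1) * Int.fract t) (Ioi 1) := by
    have := mellinConvergent_ofReal_fractIoiOne (s := -s) (by simp; linarith)
    exact (this.mono_set (Ioi_subset_Ioi zero_le_one)).congr_fun
      (fun t ht ↦ (cpow_smul_ofReal_fractIoiOne _ t).trans (indicator_of_mem ht _))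
      measurableSet_Ioi
  have hpow : IntegrableOn (fun t : ℝ ↦ (t : ℂ) ^ (-s)) (Ioi 1) :=
    integrableOn_Ioi_cpow_of_lt (by simp; linarith) one_pos
  have hfloor : ∀ t ∈ Ioi (1 : ℝ), (⌊t⌋₊ : ℂ) * (t : ℂ) ^ (-(s + 1)) =
      (t : ℂ) ^ (-s) - (t : ℂ) ^ (-s - 1) * Int.fract t := by
    intro t ht
    have ht0 : (t : ℂ) ≠ 0 := ofReal_ne_zero.mpr (zero_lt_one.trans ht).ne'
    rw [← Int.self_sub_floor, ← natCast_floor_eq_intCast_floor (zero_le_one.trans ht.le),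
      show -s = (-s - 1) + 1 by ring, cpow_add _ _ ht0, cpow_one]
    push_cast
    ring_nf
  have hzeta : riemannZeta s / s =
      1 / (s - 1) - ∫ t in Ioi (1 : ℝ), (t : ℂ) ^ (-s - 1) * Int.fract t := by
    rw [riemannZeta_eq_mul_integral_floor hs, mul_div_cancel_left₀ _ hs0,
      setIntegral_congr_fun measurableSet_Ioi hfloor, integral_sub hpow hfract,
      integral_Ioi_cpow_of_lt (by simp; linarith) one_pos]
    simp only [ofReal_one, one_cpow, neg_add_eq_sub, ← neg_sub s 1, neg_div_neg_eq]
  rw [mellin_ofReal_fractIoiOne, hzeta]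
  ring

theorem one_sub_riemannZeta₀_div {s : ℂ} (hs0 : s ≠ 0) (hs1 : s ≠ 1) :
    (1 - riemannZeta₀ s) / s = 1 / (s - 1) - riemannZeta s / s := by
  have : s - 1 ≠ 0 := sub_ne_zero.mpr hs1
  rw [riemannZeta_eq_inv_sub_add hs1]
  field_simp
  ring

theorem mellin_ofReal_fractIoiOne_neg_eq_riemannZeta₀ {s : ℂ} (hs : 0 < s.re) :
    mellin (fun t ↦ (fractIoiOne t : ℂ)) (-s) = (1 - riemannZeta₀ s) / s := by
  have hU : IsOpen {z : ℂ | 0 < z.re} := isOpen_lt continuous_const continuous_re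
  have hne : ∀ {z : ℂ}, 0 < z.re → z ≠ 0 := fun hz h ↦ by simp [h] at hz
  have hmellin : AnalyticOnNhd ℂ (fun z ↦ mellin (fun t ↦ (fractIoiOne t : ℂ)) (-z))
      {z | 0 < z.re} := by
    refine DifferentiableOn.analyticOnNhd (fun z hz ↦ ?_) hU
    have hz' : (-z).re < 0 := by simpa using hz
    exact ((differentiableAt_mellin_ofReal_fractIoiOne hz').comp z
      differentiableAt_id.neg).differentiableWithinAt
  have hzeta : AnalyticOnNhd ℂ (fun z ↦ (1 - riemannZeta₀ z) / z) {z | 0 < z.re} :=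
    DifferentiableOn.analyticOnNhd (fun z hz ↦ (((differentiable_riemannZeta₀ z).const_sub 1).div
      differentiableAt_id (hne hz)).differentiableWithinAt) hU
  have heq : (fun z ↦ mellin (fun t ↦ (fractIoiOne t : ℂ)) (-z)) =ᶠ[𝓝 2]
      fun z ↦ (1 - riemannZeta₀ z) / z := by
    filter_upwards [(isOpen_lt continuous_const continuous_re).mem_nhds
      (show (1 : ℝ) < (2 : ℂ).re by norm_num)] with z hz
    have hz1 : z ≠ 1 := by rintro rfl; simp at hz
    rw [mellin_ofReal_fractIoiOne_neg_of_one_lt_re hz,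
      one_sub_riemannZeta₀_div (hne (one_pos.trans hz)) hz1]
  exact hmellin.eqOn_of_preconnected_of_eventuallyEq hzeta
    (convex_halfSpace_re_gt 0).isPreconnected (by norm_num) heq hs

theorem cpow_smul_ofReal_fractIoiOne_eq_mul_conj {t : ℝ} (ht : 0 < t) (a b : ℂ) :
    (t : ℂ) ^ (-(a + conj b) - 1) • (fractIoiOne t : ℂ) =
      ((fractIoiOne t / t : ℝ) : ℂ) * ((t : ℂ) ^ (-a) * conj ((t : ℂ) ^ (-b))) := by
  have ht' : (t : ℂ) ≠ 0 := ofReal_ne_zero.mpr ht.ne'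
  have harg : (t : ℂ).arg ≠ Real.pi := by
    rw [arg_ofReal_of_nonneg ht.le]; exact Real.pi_ne_zero.symm
  rw [show -(a + conj b) - 1 = -a + (conj (-b) + -1) by simp; ring, cpow_add _ _ ht',
    cpow_add _ _ ht', cpow_conj _ _ harg, conj_ofReal, cpow_neg_one, smul_eq_mul, ofReal_div]
  ring

theorem integrableOn_fractIoiOne_div_mul_cpow_mul_conj {a b : ℂ} (ha : 0 < a.re)
    (hb : 0 < b.re) :
    IntegrableOn (fun t : ℝ ↦ ((fractIoiOne t / t : ℝ) : ℂ) *
      ((t : ℂ) ^ (-a) * conj ((t : ℂ) ^ (-b)))) (Ioi 0) := by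
  have hre : (-(a + conj b)).re < 0 := by simp; linarith
  exact (mellinConvergent_ofReal_fractIoiOne hre).congr_fun
    (fun t ht ↦ cpow_smul_ofReal_fractIoiOne_eq_mul_conj ht a b) measurableSet_Ioi

theorem integral_fractIoiOne_div_mul_cpow_mul_conj {a b : ℂ} (ha : 0 < a.re) (hb : 0 < b.re)
    (hab : a + conj b ≠ 1) :
    ∫ t in Ioi (0 : ℝ), ((fractIoiOne t / t : ℝ) : ℂ) * ((t : ℂ) ^ (-a) * conj ((t : ℂ) ^ (-b))) =
      1 / (a + conj b - 1) - riemannZeta (a + conj b) / (a + conj b) := by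
  have hre : 0 < (a + conj b).re := by simp; linarith
  rw [← setIntegral_congr_fun measurableSet_Ioi
      (fun t ht ↦ cpow_smul_ofReal_fractIoiOne_eq_mul_conj ht a b),
    ← mellin, mellin_ofReal_fractIoiOne_neg_eq_riemannZeta₀ hre,
    one_sub_riemannZeta₀_div (fun h ↦ by simp [h] at hre) hab]

/-- For `s₁, …, sₙ ∈ ℂ` with `Re(s_j) > 0` and `s_j + conj s_k ≠ 1` for all `j, k`,
the matrix with `(j,k)` entry
`1/(s_j + conj s_k - 1) - ζ(s_j + conj s_k)/(s_j + conj s_k)` is positive semidefinite. -/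
theorem zeta_matrix_posSemidef (n : ℕ) (s : Fin n → ℂ)
    (hs : ∀ j, 0 < (s j).re)
    (hne : ∀ j k, s j + (starRingEnd ℂ) (s k) ≠ 1) :
    ∀ c : Fin n → ℂ,
      0 ≤ ∑ j : Fin n, ∑ k : Fin n,
        (1 / (s j + (starRingEnd ℂ) (s k) - 1)
            - riemannZeta (s j + (starRingEnd ℂ) (s k)) / (s j + (starRingEnd ℂ) (s k)))
          * c j * (starRingEnd ℂ) (c k) := by
  intro c
  simp_rw [← integral_fractIoiOne_div_mul_cpow_mul_conj (hs _) (hs _) (hne _ _)]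
  exact sum_sum_integral_mul_conj_mul_nonneg
    (ae_restrict_of_forall_mem measurableSet_Ioi fun t ht ↦
      div_nonneg (fractIoiOne_nonneg t) (le_of_lt ht))
    (fun j k ↦ integrableOn_fractIoiOne_div_mul_cpow_mul_conj (hs j) (hs k)) c
end

section
/- Let n ∈ ℕ and let z₁, …, zₙ ∈ ℂ with Re(z_j) > 0 for each j. Then the n×n complex matrix whose (j,k) entry is Γ(z_j + conj(z_k)) is positive semidefinite, where Γ is the Euler Gamma function. -/
open Complex ComplexOrder MeasureTheory Set

lemma conj_cpow_real {x : ℝ} (hx : 0 < x) (w : ℂ) :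
    (starRingEnd ℂ) ((x : ℂ) ^ w) = (x : ℂ) ^ ((starRingEnd ℂ) w) := by
  have harg : (x : ℂ).arg ≠ Real.pi := by
    rw [Complex.arg_ofReal_of_nonneg hx.le]
    exact fun h => Real.pi_ne_zero h.symm
  have := Complex.conj_cpow (x : ℂ) ((starRingEnd ℂ) w) harg
  rw [Complex.conj_conj, Complex.conj_ofReal] at this
  exact this.symm

/-- For `z₁, …, zₙ ∈ ℂ` with `Re(z_j) > 0`, the matrix `(Γ(z_j + conj z_k))_{j,k}` is
positive semidefinite, where `Γ` is the Euler Gamma function. -/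
theorem gamma_matrix_posSemidef (n : ℕ) (z : Fin n → ℂ) (hz : ∀ j, 0 < (z j).re) :
    ∀ c : Fin n → ℂ,
      0 ≤ ∑ j : Fin n, ∑ k : Fin n,
        Complex.Gamma (z j + (starRingEnd ℂ) (z k)) * c j * (starRingEnd ℂ) (c k) := by
  intro c
  set w : Fin n → ℝ → ℂ := fun j x =>
    (Real.exp (-x / 2) : ℂ) * (x : ℂ) ^ (z j - 1/2) * c j with hw
  have hre : ∀ j k, 0 < (z j + (starRingEnd ℂ) (z k)).re := by
    intro j k
    simp only [Complex.add_re, Complex.conj_re]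
    exact add_pos (hz j) (hz k)
  set f : Fin n → Fin n → ℝ → ℂ := fun j k x =>
    (Real.exp (-x) : ℂ) * (x : ℂ) ^ (z j + (starRingEnd ℂ) (z k) - 1)
      * c j * (starRingEnd ℂ) (c k) with hf
  have hint : ∀ j k : Fin n, IntegrableOn (f j k) (Ioi 0) := fun j k =>
    ((Complex.GammaIntegral_convergent (hre j k)).mul_const _).mul_const _
  -- pointwise identity on `Ioi 0`
  have hpt : ∀ x ∈ Ioi (0:ℝ),
      ∑ j : Fin n, ∑ k : Fin n, f j k x = ((Complex.normSq (∑ j, w j x) : ℝ) : ℂ) := by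
    intro x hx
    rw [mem_Ioi] at hx
    have hx0 : (x : ℂ) ≠ 0 := Complex.ofReal_ne_zero.mpr hx.ne'
    rw [← Complex.mul_conj, map_sum, Finset.sum_mul_sum]
    refine Finset.sum_congr rfl fun j _ => Finset.sum_congr rfl fun k _ => ?_
    simp only [hf, hw, map_mul, Complex.conj_ofReal, conj_cpow_real hx, map_sub]
    have h12 : (starRingEnd ℂ) (1/2 : ℂ) = 1/2 := by
      simp [map_div₀, map_ofNat]
    rw [h12]
    have hcp : (x : ℂ) ^ (z j - 1/2) * (x : ℂ) ^ ((starRingEnd ℂ) (z k) - 1/2)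
        = (x : ℂ) ^ (z j + (starRingEnd ℂ) (z k) - 1) := by
      rw [← Complex.cpow_add _ _ hx0]; ring_nf
    have hexp : (Real.exp (-x / 2) : ℂ) * (Real.exp (-x / 2) : ℂ)
        = (Real.exp (-x) : ℂ) := by
      rw [← Complex.ofReal_mul, ← Real.exp_add]; ring_nf
    calc (Real.exp (-x) : ℂ) * (x:ℂ) ^ (z j + (starRingEnd ℂ) (z k) - 1)
          * c j * (starRingEnd ℂ) (c k)
        = ((Real.exp (-x / 2) : ℂ) * (Real.exp (-x / 2) : ℂ))
            * ((x:ℂ) ^ (z j - 1/2) * (x:ℂ) ^ ((starRingEnd ℂ) (z k) - 1/2))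
            * c j * (starRingEnd ℂ) (c k) := by rw [hcp, hexp]
      _ = (Real.exp (-x / 2) : ℂ) * (x:ℂ) ^ (z j - 1/2) * c j
            * ((Real.exp (-x / 2) : ℂ) * (x:ℂ) ^ ((starRingEnd ℂ) (z k) - 1/2)
              * (starRingEnd ℂ) (c k)) := by ring
  have key : ∑ j : Fin n, ∑ k : Fin n,
        Complex.Gamma (z j + (starRingEnd ℂ) (z k)) * c j * (starRingEnd ℂ) (c k)
      = ∫ x in Ioi (0:ℝ), ((Complex.normSq (∑ j, w j x) : ℝ) : ℂ) := by
    have h1 : ∀ j k : Fin n,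
        Complex.Gamma (z j + (starRingEnd ℂ) (z k)) * c j * (starRingEnd ℂ) (c k)
        = ∫ x in Ioi (0:ℝ), f j k x := by
      intro j k
      rw [Complex.Gamma_eq_integral (hre j k), Complex.GammaIntegral,
        ← MeasureTheory.integral_mul_const, ← MeasureTheory.integral_mul_const]
    calc ∑ j : Fin n, ∑ k : Fin n,
          Complex.Gamma (z j + (starRingEnd ℂ) (z k)) * c j * (starRingEnd ℂ) (c k)
        = ∑ j : Fin n, ∫ x in Ioi (0:ℝ), ∑ k : Fin n, f j k x := by
          refine Finset.sum_congr rfl fun j _ => ?_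
          rw [MeasureTheory.integral_finset_sum _ (fun k _ => hint j k)]
          exact Finset.sum_congr rfl fun k _ => h1 j k
      _ = ∫ x in Ioi (0:ℝ), ∑ j : Fin n, ∑ k : Fin n, f j k x := by
          rw [MeasureTheory.integral_finset_sum _
            (fun j _ => integrable_finset_sum _ (fun k _ => hint j k))]
      _ = ∫ x in Ioi (0:ℝ), ((Complex.normSq (∑ j, w j x) : ℝ) : ℂ) :=
          MeasureTheory.setIntegral_congr_fun measurableSet_Ioi hpt
  have hco : (∫ x in Ioi (0:ℝ), ((Complex.normSq (∑ j, w j x) : ℝ) : ℂ))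
      = ((∫ x in Ioi (0:ℝ), Complex.normSq (∑ j, w j x) : ℝ) : ℂ) := by
    exact _root_.integral_ofReal
  rw [key, hco, ← Complex.ofReal_zero, Complex.real_le_real]
  exact MeasureTheory.integral_nonneg fun x => Complex.normSq_nonneg _
end

section
/- Let m, n ∈ ℕ and let z_{j,ℓ} ∈ ℂ with Re(z_{j,ℓ}) > 0 for all 1 ≤ j ≤ n, 1 ≤ ℓ ≤ m. Then the n×n complex matrix whose (j,k) entry is ∏_{ℓ=1}^{m} Γ(z_{j,ℓ} + conj(z_{k,ℓ})) is positive semidefinite, where Γ is the Euler Gamma function. -/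
open Complex ComplexOrder MeasureTheory Set

private lemma integral_cplx_nonneg {α : Type*} [MeasurableSpace α] {μ : Measure α}
    {f : α → ℂ} (hf : ∀ᵐ x ∂μ, 0 ≤ f x) : 0 ≤ ∫ x, f x ∂μ := by
  have h : f =ᵐ[μ] fun x => ((f x).re : ℂ) := by
    filter_upwards [hf] with x hx
    have him : (f x).im = 0 := by
      have := (Complex.le_def.mp hx).2
      simpa using this.symm
    exact (Complex.ext (by simp) (by simp [him])).symm
  rw [integral_congr_ae h]
  have h2 : ∫ x, (((f x).re : ℂ)) ∂μ = ((∫ x, (f x).re ∂μ : ℝ) : ℂ) := integral_ofReal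
  rw [h2, Complex.zero_le_real]
  refine integral_nonneg_of_ae ?_
  filter_upwards [hf] with x hx
  exact (Complex.le_def.mp hx).1

/-- Schur-type step: multiplying a positive semidefinite kernel entrywise by
`Γ(w j + conj (w k))` preserves nonnegativity of the quadratic form. -/
private lemma gamma_schur_step {n : ℕ} (w : Fin n → ℂ) (hw : ∀ j, 0 < (w j).re)
    (B : Fin n → Fin n → ℂ)
    (hB : ∀ c : Fin n → ℂ, 0 ≤ ∑ j : Fin n, ∑ k : Fin n, B j k * c j * (starRingEnd ℂ) (c k))
    (c : Fin n → ℂ) :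
    0 ≤ ∑ j : Fin n, ∑ k : Fin n,
      (Complex.Gamma (w j + (starRingEnd ℂ) (w k)) * B j k) * c j * (starRingEnd ℂ) (c k) := by
  set f : Fin n → Fin n → ℝ → ℂ := fun j k x =>
    B j k * c j * (starRingEnd ℂ) (c k) *
      (↑(Real.exp (-x)) * (x : ℂ) ^ (w j + (starRingEnd ℂ) (w k) - 1)) with hf
  have hre : ∀ j k, 0 < (w j + (starRingEnd ℂ) (w k)).re := by
    intro j k
    simp only [Complex.add_re, Complex.conj_re]
    exact add_pos (hw j) (hw k)
  have hint : ∀ j k : Fin n, IntegrableOn (f j k) (Ioi (0:ℝ)) := by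
    intro j k
    exact (Complex.GammaIntegral_convergent (hre j k)).const_mul _
  have hterm : ∀ j k : Fin n,
      Complex.Gamma (w j + (starRingEnd ℂ) (w k)) * B j k * c j * (starRingEnd ℂ) (c k)
        = ∫ x in Ioi (0:ℝ), f j k x := by
    intro j k
    rw [Complex.Gamma_eq_integral (hre j k), Complex.GammaIntegral]
    rw [MeasureTheory.integral_const_mul]
    ring
  calc (0:ℂ) ≤ ∫ x in Ioi (0:ℝ), ∑ j : Fin n, ∑ k : Fin n, f j k x := by
        refine integral_cplx_nonneg ?_
        filter_upwards [ae_restrict_mem measurableSet_Ioi] with x hx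
        have hx0 : (0:ℝ) < x := hx
        have hxne : (x : ℂ) ≠ 0 := by
          exact_mod_cast ne_of_gt hx0
        have harg : (x : ℂ).arg ≠ Real.pi := by
          rw [Complex.arg_ofReal_of_nonneg hx0.le]
          exact fun h => Real.pi_ne_zero h.symm
        have hcpow : ∀ k : Fin n, (x:ℂ) ^ (starRingEnd ℂ) (w k)
            = (starRingEnd ℂ) ((x:ℂ) ^ (w k)) := by
          intro k
          rw [Complex.cpow_conj _ _ harg, Complex.conj_ofReal]
        have key : (∑ j : Fin n, ∑ k : Fin n, f j k x)
            = ((Real.exp (-x) * x⁻¹ : ℝ) : ℂ) *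
              ∑ j : Fin n, ∑ k : Fin n,
                B j k * (c j * (x:ℂ) ^ (w j)) *
                  (starRingEnd ℂ) (c k * (x:ℂ) ^ (w k)) := by
          rw [Finset.mul_sum]
          refine Finset.sum_congr rfl fun j _ => ?_
          rw [Finset.mul_sum]
          refine Finset.sum_congr rfl fun k _ => ?_
          have : (x:ℂ) ^ (w j + (starRingEnd ℂ) (w k) - 1)
              = (x:ℂ) ^ (w j) * (starRingEnd ℂ) ((x:ℂ) ^ (w k)) * (x:ℂ)⁻¹ := by
            rw [sub_eq_add_neg, Complex.cpow_add _ _ hxne, Complex.cpow_add _ _ hxne,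
              Complex.cpow_neg_one, hcpow]
          simp only [hf, this, map_mul, Complex.ofReal_mul, Complex.ofReal_inv]
          ring
        rw [key]
        refine mul_nonneg ?_ (hB fun j => c j * (x:ℂ) ^ (w j))
        rw [Complex.zero_le_real]
        positivity
    _ = ∑ j : Fin n, ∑ k : Fin n,
          (Complex.Gamma (w j + (starRingEnd ℂ) (w k)) * B j k) * c j * (starRingEnd ℂ) (c k) := by
        rw [MeasureTheory.integral_finset_sum _ fun j _ =>
          (integrable_finset_sum _ fun k _ => hint j k)]
        refine Finset.sum_congr rfl fun j _ => ?_
        rw [MeasureTheory.integral_finset_sum _ fun k _ => hint j k]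
        exact Finset.sum_congr rfl fun k _ => (hterm j k).symm

/-- For `z_{j,ℓ} ∈ ℂ` with `Re(z_{j,ℓ}) > 0`, the matrix with `(j,k)` entry
`∏_{ℓ=1}^m Γ(z_{j,ℓ} + conj z_{k,ℓ})` is positive semidefinite. -/
theorem gamma_product_matrix_posSemidef (m n : ℕ) (z : Fin n → Fin m → ℂ)
    (hz : ∀ j l, 0 < (z j l).re) :
    ∀ c : Fin n → ℂ,
      0 ≤ ∑ j : Fin n, ∑ k : Fin n,
        (∏ l : Fin m, Complex.Gamma (z j l + (starRingEnd ℂ) (z k l)))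
          * c j * (starRingEnd ℂ) (c k) := by
  induction m with
  | zero =>
      intro c
      simp only [Finset.univ_eq_empty, Finset.prod_empty, one_mul]
      have : (∑ j : Fin n, ∑ k : Fin n, c j * (starRingEnd ℂ) (c k))
          = (∑ j : Fin n, c j) * (starRingEnd ℂ) (∑ k : Fin n, c k) := by
        rw [map_sum, Finset.sum_mul]
        exact Finset.sum_congr rfl fun j _ => by rw [Finset.mul_sum]
      rw [this, Complex.mul_conj]
      exact Complex.zero_le_real.2 (Complex.normSq_nonneg _)
  | succ M ih =>
      intro c
      have h := gamma_schur_step (fun j => z j 0) (fun j => hz j 0)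
        (fun j k => ∏ l : Fin M, Complex.Gamma (z j l.succ + (starRingEnd ℂ) (z k l.succ)))
        (ih (fun j l => z j l.succ) (fun j l => hz j l.succ)) c
      simpa only [Fin.prod_univ_succ] using h
end

section
/- Let n ∈ ℕ, let λ > 0 be real, and let φ₁, …, φₙ be real numbers with 0 < φ_j < π/2 for each j. Then the real symmetric n×n matrix whose (j,k) entry is (sin(φ_j + φ_k))^{−λ} is positive semidefinite. -/
/-!
Write `sin (φ_j + φ_k) = cos φ_j cos φ_k (x_j + x_k)` with `x_j = tan φ_j > 0`; the factors
`cos φ_j ^ (-λ)` are a diagonal congruence, so it suffices that `((x_j + x_k) ^ (-λ))` is positive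
semidefinite. By Euler's integral `r ^ (-λ) = Γ(λ)⁻¹ ∫₀^∞ t ^ (λ - 1) e^{-r t} dt`, its quadratic
form is `Γ(λ)⁻¹ ∫₀^∞ t ^ (λ - 1) (∑ⱼ cⱼ e^{-x_j t})² dt ≥ 0`.
-/

open MeasureTheory Set Real

lemma rpow_neg_eq_inv_Gamma_mul_integral {r s : ℝ} (hr : 0 < r) (hs : 0 < s) :
    r ^ (-s) = (Gamma s)⁻¹ * ∫ t in Ioi 0, t ^ (s - 1) * exp (-(r * t)) := by
  rw [integral_rpow_mul_exp_neg_mul_Ioi hs hr, one_div, inv_rpow hr.le, ← rpow_neg hr.le,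
    mul_comm (r ^ (-s)), inv_mul_cancel_left₀ (Gamma_pos_of_pos hs).ne']

lemma integrableOn_rpow_mul_exp_neg_mul {r s : ℝ} (hr : 0 < r) (hs : 0 < s) :
    IntegrableOn (fun t ↦ t ^ (s - 1) * exp (-(r * t))) (Ioi 0) := by
  simpa only [rpow_one, neg_mul] using
    integrableOn_rpow_mul_exp_neg_mul_rpow (p := 1) (by linarith) one_pos hr

lemma sin_add_eq_cos_mul_cos_mul_tan_add {a b : ℝ} (ha : cos a ≠ 0) (hb : cos b ≠ 0) :
    sin (a + b) = cos a * cos b * (tan a + tan b) := by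
  rw [sin_add, tan_eq_sin_div_cos, tan_eq_sin_div_cos]
  field_simp

section QuadForm

variable {ι : Type*} [Fintype ι]

lemma sum_sum_exp_neg_add_mul_mul (x c : ι → ℝ) (t : ℝ) :
    ∑ j, ∑ k, exp (-((x j + x k) * t)) * (c j * c k) = (∑ j, c j * exp (-(x j * t))) ^ 2 := by
  rw [sq, Finset.sum_mul_sum]
  refine Finset.sum_congr rfl fun j _ ↦ Finset.sum_congr rfl fun k _ ↦ ?_
  rw [add_mul, neg_add, exp_add]
  ring

lemma sum_sum_add_rpow_neg_mul_mul_eq_integral {x : ι → ℝ} (hx : ∀ j, 0 < x j) {s : ℝ}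
    (hs : 0 < s) (c : ι → ℝ) :
    ∑ j, ∑ k, (x j + x k) ^ (-s) * c j * c k =
      (Gamma s)⁻¹ * ∫ t in Ioi 0, t ^ (s - 1) * (∑ j, c j * exp (-(x j * t))) ^ 2 := by
  have hint : ∀ j k, IntegrableOn
      (fun t ↦ t ^ (s - 1) * exp (-((x j + x k) * t)) * c j * c k) (Ioi 0) := fun j k ↦
    ((integrableOn_rpow_mul_exp_neg_mul (add_pos (hx j) (hx k)) hs).mul_const _).mul_const _
  simp_rw [← sum_sum_exp_neg_add_mul_mul, Finset.mul_sum, ← mul_assoc]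
  rw [integral_finsetSum _ fun j _ ↦ integrable_finsetSum _ fun k _ ↦ hint j k,
    Finset.mul_sum]
  refine Finset.sum_congr rfl fun j _ ↦ ?_
  rw [integral_finsetSum _ fun k _ ↦ hint j k, Finset.mul_sum]
  refine Finset.sum_congr rfl fun k _ ↦ ?_
  rw [integral_mul_const, integral_mul_const, rpow_neg_eq_inv_Gamma_mul_integral (add_pos (hx j) (hx k)) hs]
  ring

lemma sum_sum_add_rpow_neg_mul_mul_nonneg {x : ι → ℝ} (hx : ∀ j, 0 < x j) {s : ℝ}
    (hs : 0 < s) (c : ι → ℝ) :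
    0 ≤ ∑ j, ∑ k, (x j + x k) ^ (-s) * c j * c k := by
  rw [sum_sum_add_rpow_neg_mul_mul_eq_integral hx hs]
  refine mul_nonneg (inv_nonneg.2 (Gamma_pos_of_pos hs).le) ?_
  exact setIntegral_nonneg measurableSet_Ioi fun t ht ↦
    mul_nonneg (rpow_nonneg (le_of_lt ht) _) (sq_nonneg _)

end QuadForm

/-- For real `λ > 0` and real `φ₁, …, φₙ` with `0 < φ_j < π/2`, the real symmetric matrix
with `(j,k)` entry `(sin(φ_j + φ_k))^{-λ}` is positive semidefinite. -/
theorem inv_sin_pow_matrix_posSemidef (n : ℕ) (lam : ℝ) (hlam : 0 < lam)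
    (φ : Fin n → ℝ) (hφ0 : ∀ j, 0 < φ j) (hφ1 : ∀ j, φ j < Real.pi / 2) :
    ∀ c : Fin n → ℝ,
      0 ≤ ∑ j : Fin n, ∑ k : Fin n,
        Real.sin (φ j + φ k) ^ (-lam) * c j * c k := by
  intro c
  have hcos : ∀ j, 0 < cos (φ j) := fun j ↦
    cos_pos_of_mem_Ioo ⟨by linarith [pi_pos, hφ0 j], hφ1 j⟩
  have htan : ∀ j, 0 < tan (φ j) := fun j ↦ tan_pos_of_pos_of_lt_pi_div_two (hφ0 j) (hφ1 j)
  have hentry : ∀ j k, sin (φ j + φ k) ^ (-lam) * c j * c k =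
      (tan (φ j) + tan (φ k)) ^ (-lam) * (cos (φ j) ^ (-lam) * c j) *
        (cos (φ k) ^ (-lam) * c k) := fun j k ↦ by
    rw [sin_add_eq_cos_mul_cos_mul_tan_add (hcos j).ne' (hcos k).ne',
      mul_rpow (mul_pos (hcos j) (hcos k)).le (add_pos (htan j) (htan k)).le,
      mul_rpow (hcos j).le (hcos k).le]
    ring
  simp_rw [hentry]
  exact sum_sum_add_rpow_neg_mul_mul_nonneg htan hlam _
end

section
/- Let n ∈ ℕ and let p₁, …, pₙ, q₁, …, qₙ ∈ ℂ with Re(p_j) > 0 and Re(q_j) > 0 for each j. Then the n×n complex matrix whose (j,k) entry is B(p_j + conj(p_k), q_j + conj(q_k)) is positive semidefinite, where B is the Euler Beta function. -/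
open Complex ComplexOrder

open MeasureTheory in
private lemma sum_sum_intervalIntegral {n : ℕ} (F : Fin n → Fin n → ℝ → ℂ)
    (hint : ∀ j k, IntervalIntegrable (F j k) volume 0 1) :
    ∑ j : Fin n, ∑ k : Fin n, (∫ x in (0:ℝ)..1, F j k x)
      = ∫ x in (0:ℝ)..1, ∑ j : Fin n, ∑ k : Fin n, F j k x := by
  have hsum : ∀ j, IntervalIntegrable (fun x => ∑ k : Fin n, F j k x) volume 0 1 := by
    intro j
    have := IntervalIntegrable.sum (μ := volume) (a := 0) (b := 1)
      Finset.univ (f := fun k => F j k) (fun k _ => hint j k)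
    simpa [Finset.sum_fn] using this
  rw [intervalIntegral.integral_finset_sum
    (f := fun j (x : ℝ) => ∑ k : Fin n, F j k x) (fun j _ => hsum j)]
  exact Finset.sum_congr rfl fun j _ =>
    (intervalIntegral.integral_finset_sum (fun k _ => hint j k)).symm

open MeasureTheory intervalIntegral in
/-- For `p₁, …, pₙ, q₁, …, qₙ ∈ ℂ` with `Re(p_j) > 0` and `Re(q_j) > 0`, the matrix with
`(j,k)` entry `B(p_j + conj p_k, q_j + conj q_k)` is positive semidefinite, where
`B(p, q) = ∫₀¹ x^{p-1}(1-x)^{q-1} dx` is the Euler Beta function. -/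
theorem beta_matrix_posSemidef (n : ℕ) (p q : Fin n → ℂ)
    (hp : ∀ j, 0 < (p j).re) (hq : ∀ j, 0 < (q j).re) :
    ∀ c : Fin n → ℂ,
      0 ≤ ∑ j : Fin n, ∑ k : Fin n,
        Complex.betaIntegral (p j + (starRingEnd ℂ) (p k)) (q j + (starRingEnd ℂ) (q k))
          * c j * (starRingEnd ℂ) (c k) := by
  intro c
  set f : Fin n → ℝ → ℂ := fun j x =>
    c j * (x : ℂ) ^ (p j - 1/2) * (1 - (x : ℂ)) ^ (q j - 1/2) with hf
  set g : ℝ → ℂ := fun x => ∑ j, f j x with hg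
  -- each entry of the sum is an interval integral
  have hint : ∀ j k : Fin n, IntervalIntegrable
      (fun x : ℝ => c j * (starRingEnd ℂ) (c k) *
        ((x : ℂ) ^ (p j + (starRingEnd ℂ) (p k) - 1) *
          (1 - (x : ℂ)) ^ (q j + (starRingEnd ℂ) (q k) - 1))) volume 0 1 := by
    intro j k
    refine (Complex.betaIntegral_convergent ?_ ?_).const_mul _
    · simpa using add_pos (hp j) (hp k)
    · simpa using add_pos (hq j) (hq k)
  have step1 : ∑ j : Fin n, ∑ k : Fin n,
      Complex.betaIntegral (p j + (starRingEnd ℂ) (p k)) (q j + (starRingEnd ℂ) (q k))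
        * c j * (starRingEnd ℂ) (c k)
      = ∫ x in (0:ℝ)..1, ∑ j : Fin n, ∑ k : Fin n,
          c j * (starRingEnd ℂ) (c k) *
            ((x : ℂ) ^ (p j + (starRingEnd ℂ) (p k) - 1) *
              (1 - (x : ℂ)) ^ (q j + (starRingEnd ℂ) (q k) - 1)) := by
    rw [← sum_sum_intervalIntegral _ hint]
    refine Finset.sum_congr rfl fun j _ => Finset.sum_congr rfl fun k _ => ?_
    rw [Complex.betaIntegral, mul_assoc, mul_comm, ← intervalIntegral.integral_const_mul]
  -- pointwise identity on (0,1)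
  have hptwise : ∀ x ∈ Set.Ioo (0:ℝ) 1,
      (∑ j : Fin n, ∑ k : Fin n,
        c j * (starRingEnd ℂ) (c k) *
          ((x : ℂ) ^ (p j + (starRingEnd ℂ) (p k) - 1) *
            (1 - (x : ℂ)) ^ (q j + (starRingEnd ℂ) (q k) - 1)))
      = ((Complex.normSq (g x) : ℝ) : ℂ) := by
    intro x hx
    have hx0 : (0:ℝ) < x := hx.1
    have hx1 : (0:ℝ) < 1 - x := by linarith [hx.2]
    have hxc : (x : ℂ) ≠ 0 := by exact_mod_cast hx0.ne'
    have h1x : (1 - (x : ℂ)) = ((1 - x : ℝ) : ℂ) := by push_cast; ring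
    have h1xc : (1 - (x : ℂ)) ≠ 0 := by rw [h1x]; exact_mod_cast hx1.ne'
    have hargx : (x : ℂ).arg ≠ Real.pi := by
      rw [Complex.arg_ofReal_of_nonneg hx0.le]; exact Real.pi_ne_zero.symm
    have harg1x : (1 - (x : ℂ)).arg ≠ Real.pi := by
      rw [h1x, Complex.arg_ofReal_of_nonneg hx1.le]; exact Real.pi_ne_zero.symm
    have hconjx : (starRingEnd ℂ) (x : ℂ) = (x : ℂ) := Complex.conj_ofReal x
    have hconj1x : (starRingEnd ℂ) (1 - (x : ℂ)) = (1 - (x : ℂ)) := by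
      rw [h1x]; exact Complex.conj_ofReal _
    have cpow_conj' : ∀ (z : ℂ) (hz : z.arg ≠ Real.pi) (hcz : (starRingEnd ℂ) z = z)
        (s : ℂ), z ^ ((starRingEnd ℂ) s) = (starRingEnd ℂ) (z ^ s) := by
      intro z hz hcz s
      rw [Complex.cpow_conj _ _ hz, hcz]
    rw [← Complex.mul_conj, hg, map_sum, Finset.sum_mul_sum]
    refine Finset.sum_congr rfl fun j _ => Finset.sum_congr rfl fun k _ => ?_
    simp only [hf, map_mul]
    rw [← cpow_conj' _ hargx hconjx, ← cpow_conj' _ harg1x hconj1x]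
    have e1 : (x : ℂ) ^ (p j + (starRingEnd ℂ) (p k) - 1)
        = (x : ℂ) ^ (p j - 1/2) * (x : ℂ) ^ ((starRingEnd ℂ) (p k - 1/2)) := by
      rw [← Complex.cpow_add _ _ hxc]
      congr 1
      simp only [map_sub, map_div₀, map_one, map_ofNat, Complex.conj_ofNat]
      ring
    have e2 : (1 - (x : ℂ)) ^ (q j + (starRingEnd ℂ) (q k) - 1)
        = (1 - (x : ℂ)) ^ (q j - 1/2) * (1 - (x : ℂ)) ^ ((starRingEnd ℂ) (q k - 1/2)) := by
      rw [← Complex.cpow_add _ _ h1xc]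
      congr 1
      simp only [map_sub, map_div₀, map_one, map_ofNat, Complex.conj_ofNat]
      ring
    rw [e1, e2]
    ring
  -- replace the integrand a.e.
  have hae : ∀ᵐ x : ℝ, x ≠ 1 := by
    rw [MeasureTheory.ae_iff]
    simp [MeasureTheory.measure_singleton (1:ℝ)]
  have step2 : (∫ x in (0:ℝ)..1, ∑ j : Fin n, ∑ k : Fin n,
          c j * (starRingEnd ℂ) (c k) *
            ((x : ℂ) ^ (p j + (starRingEnd ℂ) (p k) - 1) *
              (1 - (x : ℂ)) ^ (q j + (starRingEnd ℂ) (q k) - 1)))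
      = ∫ x in (0:ℝ)..1, ((Complex.normSq (g x) : ℝ) : ℂ) := by
    refine intervalIntegral.integral_congr_ae ?_
    filter_upwards [hae] with x hx1 hx
    rw [Set.uIoc_of_le (by norm_num : (0:ℝ) ≤ 1)] at hx
    exact hptwise x ⟨hx.1, lt_of_le_of_ne hx.2 hx1⟩
  rw [step1, step2, intervalIntegral.integral_ofReal]
  rw [Complex.le_def]
  constructor
  · simpa using intervalIntegral.integral_nonneg (by norm_num)
      (fun u _ => Complex.normSq_nonneg (g u))
  · simp
end

section
/- Let m, n ∈ ℕ and let p_{j,ℓ}, q_{j,ℓ} ∈ ℂ with Re(p_{j,ℓ}) > 0 and Re(q_{j,ℓ}) > 0 for all 1 ≤ j ≤ n, 1 ≤ ℓ ≤ m. Then the n×n complex matrix whose (j,k) entry is ∏_{ℓ=1}^{m} B(p_{j,ℓ} + conj(p_{k,ℓ}), q_{j,ℓ} + conj(q_{k,ℓ})) is positive semidefinite, where B is the Euler Beta function. -/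
/-!
Writing `f_{p,q}(x) = x ^ (p - 1/2) (1 - x) ^ (q - 1/2)`, one has
`B(p + conj p', q + conj q') = ∫₀¹ f_{p,q} conj f_{p',q'}`, so for each `ℓ` the matrix
`B(p_{j,ℓ} + conj p_{k,ℓ}, q_{j,ℓ} + conj q_{k,ℓ})` is the Gram matrix of the functions
`conj f_{p_{j,ℓ}, q_{j,ℓ}}` in `L²(0,1)`, which lie there because `Re p, Re q > 0`.
Gram matrices are positive semidefinite, and by the Schur product theorem so is the entrywise
product over `ℓ`.
-/

open Complex ComplexOrder MeasureTheory Set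
open scoped ComplexConjugate

namespace Complex

lemma ofReal_cpow_add_conj {r : ℝ} (hr : 0 < r) (a b : ℂ) :
    (r : ℂ) ^ (a + conj b) = (r : ℂ) ^ a * conj ((r : ℂ) ^ b) := by
  have harg : (r : ℂ).arg ≠ Real.pi := by
    rw [arg_ofReal_of_nonneg hr.le]; exact Real.pi_ne_zero.symm
  rw [cpow_add _ _ (ofReal_ne_zero.mpr hr.ne'), cpow_conj _ _ harg, conj_ofReal]

noncomputable def betaHalfIntegrand (p q : ℂ) (x : ℝ) : ℂ :=
  (x : ℂ) ^ (p - 1 / 2) * (1 - (x : ℂ)) ^ (q - 1 / 2)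

lemma betaIntegrand_add_conj_eq {x : ℝ} (hx : x ∈ Ioo (0 : ℝ) 1) (p q p' q' : ℂ) :
    (x : ℂ) ^ (p + conj p' - 1) * (1 - (x : ℂ)) ^ (q + conj q' - 1)
      = betaHalfIntegrand p q x * conj (betaHalfIntegrand p' q' x) := by
  have half_split : ∀ a b : ℂ, a + conj b - 1 = (a - 1 / 2) + conj (b - 1 / 2) := fun a b => by
    rw [map_sub, map_div₀, map_one, map_ofNat]; ring
  have h1x : (1 : ℂ) - x = ((1 - x : ℝ) : ℂ) := by push_cast; ring
  rw [half_split, half_split, h1x, ofReal_cpow_add_conj hx.1,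
    ofReal_cpow_add_conj (sub_pos.mpr hx.2), betaHalfIntegrand, betaHalfIntegrand, h1x, map_mul]
  ring

lemma betaIntegral_add_conj_eq_integral (p q p' q' : ℂ) :
    betaIntegral (p + conj p') (q + conj q')
      = ∫ x in Ioo (0 : ℝ) 1, betaHalfIntegrand p q x * conj (betaHalfIntegrand p' q' x) := by
  rw [betaIntegral, intervalIntegral.integral_of_le zero_le_one, integral_Ioc_eq_integral_Ioo]
  exact setIntegral_congr_fun measurableSet_Ioo fun x hx => betaIntegrand_add_conj_eq hx _ _ _ _

lemma memLp_betaHalfIntegrand {p q : ℂ} (hp : 0 < p.re) (hq : 0 < q.re) :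
    MemLp (betaHalfIntegrand p q) 2 (volume.restrict (Ioo 0 1)) := by
  have hmeas : AEStronglyMeasurable (betaHalfIntegrand p q) (volume.restrict (Ioo 0 1)) := by
    unfold betaHalfIntegrand; fun_prop
  have hconv := betaIntegral_convergent (u := p + conj p) (v := q + conj q)
    (by simpa using add_pos hp hp) (by simpa using add_pos hq hq)
  have hint : IntegrableOn (fun x => betaHalfIntegrand p q x * conj (betaHalfIntegrand p q x))
      (Ioo 0 1) := by
    refine ((intervalIntegrable_iff_integrableOn_Ioc_of_le zero_le_one).mp hconv).mono_set
      Ioo_subset_Ioc_self |>.congr_fun (fun x hx => betaIntegrand_add_conj_eq hx _ _ _ _)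
      measurableSet_Ioo
  refine (memLp_two_iff_integrable_sq_norm hmeas).mpr
    (IntegrableOn.congr_fun hint.norm (fun x _ => ?_) measurableSet_Ioo)
  simp [sq]

lemma posSemidef_betaIntegral_add_conj {ι : Type*} [Finite ι] (p q : ι → ℂ)
    (hp : ∀ j, 0 < (p j).re) (hq : ∀ j, 0 < (q j).re) :
    (Matrix.of fun j k => betaIntegral (p j + conj (p k)) (q j + conj (q k))).PosSemidef := by
  -- `⟪f, g⟫ = ∫ conj f * g` in `L²`, hence the conjugates
  let v : ι → Lp ℂ 2 (volume.restrict (Ioo (0 : ℝ) 1)) := fun j =>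
    (memLp_betaHalfIntegrand (hp j) (hq j)).star.toLp
  suffices hgram : Matrix.of (fun j k => betaIntegral (p j + conj (p k)) (q j + conj (q k)))
      = Matrix.gram ℂ v from hgram ▸ Matrix.posSemidef_gram ℂ v
  ext j k
  rw [Matrix.of_apply, Matrix.gram_apply, L2.inner_def, betaIntegral_add_conj_eq_integral]
  refine integral_congr_ae ?_
  filter_upwards [(memLp_betaHalfIntegrand (hp j) (hq j)).star.coeFn_toLp,
    (memLp_betaHalfIntegrand (hp k) (hq k)).star.coeFn_toLp] with x hj hk
  simp [v, hj, hk, mul_comm]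

end Complex

namespace Matrix

variable {ι n 𝕜 : Type*} [RCLike 𝕜]

theorem posSemidef_finset_prod_hadamard [Finite n] (s : Finset ι) {A : ι → Matrix n n 𝕜}
    (hA : ∀ l ∈ s, (A l).PosSemidef) : (of fun j k => ∏ l ∈ s, A l j k).PosSemidef := by
  classical
  induction s using Finset.induction_on with
  | empty =>
    simpa [vecMulVec] using posSemidef_vecMulVec_self_star (1 : n → 𝕜)
  | insert a s ha ih =>
    simp_rw [Finset.prod_insert ha]
    exact (hA a (Finset.mem_insert_self a s)).hadamard
      (ih fun l hl => hA l (Finset.mem_insert_of_mem hl))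

theorem PosSemidef.sum_mul_mul_star_nonneg [Fintype n] {M : Matrix n n 𝕜} (hM : M.PosSemidef)
    (c : n → 𝕜) : 0 ≤ ∑ j, ∑ k, M j k * c j * star (c k) := by
  simpa [dotProduct, mulVec, Finset.mul_sum, mul_comm, mul_left_comm, mul_assoc]
    using hM.dotProduct_mulVec_nonneg (star c)

end Matrix

/-- For `p_{j,ℓ}, q_{j,ℓ} ∈ ℂ` with positive real parts, the matrix with `(j,k)` entry
`∏_{ℓ=1}^m B(p_{j,ℓ} + conj p_{k,ℓ}, q_{j,ℓ} + conj q_{k,ℓ})` is positive semidefinite,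
where `B` is the Euler Beta function. -/
theorem beta_product_matrix_posSemidef (m n : ℕ) (p q : Fin n → Fin m → ℂ)
    (hp : ∀ j l, 0 < (p j l).re) (hq : ∀ j l, 0 < (q j l).re) :
    ∀ c : Fin n → ℂ,
      0 ≤ ∑ j : Fin n, ∑ k : Fin n,
        (∏ l : Fin m,
            Complex.betaIntegral (p j l + (starRingEnd ℂ) (p k l))
              (q j l + (starRingEnd ℂ) (q k l)))
          * c j * (starRingEnd ℂ) (c k) := by
  intro c
  have hB : ∀ l, (Matrix.of fun j k =>
      betaIntegral (p j l + conj (p k l)) (q j l + conj (q k l))).PosSemidef := fun l =>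
    posSemidef_betaIntegral_add_conj (p · l) (q · l) (hp · l) (hq · l)
  simpa using (Matrix.posSemidef_finset_prod_hadamard Finset.univ fun l _ => hB l
    ).sum_mul_mul_star_nonneg c
end

section
/- Let m, n ∈ ℕ, let p₁, …, p_m ∈ ℕ with p_ℓ ≥ 1, and let s_{j,ℓ} ∈ ℂ with 0 < Re(s_{j,ℓ}) < 1/2 for all 1 ≤ j ≤ n, 1 ≤ ℓ ≤ m. Then the n×n complex matrix whose (j,k) entry is ∏_{ℓ=1}^{m} π·(w_{jk,ℓ})_{p_ℓ}·ζ(p_ℓ + w_{jk,ℓ})/sin(π w_{jk,ℓ}), where w_{jk,ℓ} = s_{j,ℓ} + conj(s_{k,ℓ}) and (w)_p = w(w+1)⋯(w+p−1) is the shifted factorial, is positive semidefinite. -/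
open Complex ComplexOrder

open MeasureTheory Set ComplexConjugate

private noncomputable def QF {n : ℕ} (M : Fin n → Fin n → ℂ) (c : Fin n → ℂ) : ℂ :=
  ∑ j : Fin n, ∑ k : Fin n, M j k * c j * conj (c k)

private lemma real_cpow_conj {t : ℝ} (ht : 0 < t) (z : ℂ) :
    conj ((t:ℂ) ^ z) = (t:ℂ) ^ (conj z) := by
  rw [Complex.cpow_conj _ _ (by rw [Complex.arg_ofReal_of_nonneg ht.le]; exact Ne.symm Real.pi_ne_zero),
    Complex.conj_ofReal]

private lemma setIntegral_nonneg_complex {F : ℝ → ℂ} (h : ∀ t ∈ Ioi (0:ℝ), 0 ≤ F t) :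
    0 ≤ ∫ t in Ioi (0:ℝ), F t := by
  by_cases hF : Integrable F (volume.restrict (Ioi 0))
  · rw [Complex.nonneg_iff]
    constructor
    · rw [← RCLike.re_eq_complex_re, ← integral_re hF]
      refine setIntegral_nonneg measurableSet_Ioi fun t ht => ?_
      have := (Complex.nonneg_iff.mp (h t ht)).1
      simpa [RCLike.re_eq_complex_re] using this
    · rw [← RCLike.im_eq_complex_im, ← integral_im hF]
      have : ∫ t in Ioi (0:ℝ), RCLike.im (F t) = ∫ t in Ioi (0:ℝ), (0:ℝ) := by
        refine setIntegral_congr_fun measurableSet_Ioi fun t ht => ?_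
        have := (Complex.nonneg_iff.mp (h t ht)).2
        simpa [RCLike.im_eq_complex_im] using this.symm
      rw [this, integral_zero]
  · rw [integral_undef hF]

private lemma QFstep {n : ℕ} (N : Fin n → Fin n → ℂ)
    (hN : ∀ d : Fin n → ℂ, 0 ≤ QF N d)
    (g : ℝ → ℝ) (hg : ∀ t ∈ Ioi (0:ℝ), 0 ≤ g t)
    (f : Fin n → ℝ → ℂ)
    (hint : ∀ j k : Fin n,
      IntegrableOn (fun t : ℝ => ((g t : ℝ) : ℂ) * (f j t * conj (f k t))) (Ioi 0) volume)
    (c : Fin n → ℂ) :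
    0 ≤ QF (fun j k => (∫ t in Ioi (0:ℝ), ((g t : ℝ) : ℂ) * (f j t * conj (f k t))) * N j k) c := by
  have hFint : ∀ j k : Fin n,
      Integrable (fun t : ℝ => (((g t : ℝ) : ℂ) * (f j t * conj (f k t))) * (N j k * c j * conj (c k)))
        (volume.restrict (Ioi 0)) := fun j k => (hint j k).mul_const _
  have h1 : ∀ j k : Fin n,
      ((∫ t in Ioi (0:ℝ), ((g t : ℝ) : ℂ) * (f j t * conj (f k t))) * N j k) * c j * conj (c k)
        = ∫ t in Ioi (0:ℝ), (((g t : ℝ) : ℂ) * (f j t * conj (f k t))) * (N j k * c j * conj (c k)) := by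
    intro j k
    rw [MeasureTheory.integral_mul_const]
    ring
  unfold QF
  calc (0:ℂ)
      ≤ ∫ t in Ioi (0:ℝ), ∑ j : Fin n, ∑ k : Fin n,
          (((g t : ℝ) : ℂ) * (f j t * conj (f k t))) * (N j k * c j * conj (c k)) := by
        refine setIntegral_nonneg_complex fun t ht => ?_
        have heq : ∑ j : Fin n, ∑ k : Fin n,
            (((g t : ℝ) : ℂ) * (f j t * conj (f k t))) * (N j k * c j * conj (c k))
            = ((g t : ℝ) : ℂ) * QF N (fun j => f j t * c j) := by
          unfold QF
          rw [Finset.mul_sum]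
          refine Finset.sum_congr rfl fun j _ => ?_
          rw [Finset.mul_sum]
          refine Finset.sum_congr rfl fun k _ => ?_
          rw [map_mul]
          ring
        rw [heq]
        have h0g : (0:ℂ) ≤ ((g t : ℝ) : ℂ) := by
          rw [Complex.zero_le_real]
          exact hg t ht
        exact mul_nonneg h0g (hN _)
    _ = ∑ j : Fin n, ∑ k : Fin n, ∫ t in Ioi (0:ℝ),
          (((g t : ℝ) : ℂ) * (f j t * conj (f k t))) * (N j k * c j * conj (c k)) := by
        rw [MeasureTheory.integral_finset_sum _
          (fun j _ => integrable_finset_sum _ (fun k _ => hFint j k))]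
        exact Finset.sum_congr rfl fun j _ => MeasureTheory.integral_finset_sum _ (fun k _ => hFint j k)
    _ = ∑ j : Fin n, ∑ k : Fin n,
          ((∫ t in Ioi (0:ℝ), ((g t : ℝ) : ℂ) * (f j t * conj (f k t))) * N j k) * c j * conj (c k) := by
        exact Finset.sum_congr rfl fun j _ => Finset.sum_congr rfl fun k _ => (h1 j k).symm

private lemma QFtsum {n : ℕ} (G : ℕ → Fin n → Fin n → ℂ) (N : Fin n → Fin n → ℂ)
    (hsum : ∀ j k : Fin n, Summable fun i => G i j k)
    (hpos : ∀ (i : ℕ) (d : Fin n → ℂ), 0 ≤ QF (fun j k => G i j k * N j k) d) (c : Fin n → ℂ) :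
    0 ≤ QF (fun j k => (∑' i : ℕ, G i j k) * N j k) c := by
  have hFs : ∀ j k : Fin n, Summable fun i => (G i j k * N j k) * c j * conj (c k) := by
    intro j k
    refine ((hsum j k).mul_right (N j k * c j * conj (c k))).congr fun i => by ring
  unfold QF
  have h1 : ∀ j k : Fin n, ((∑' i : ℕ, G i j k) * N j k) * c j * conj (c k)
      = ∑' i : ℕ, (G i j k * N j k) * c j * conj (c k) := by
    intro j k
    rw [tsum_mul_right, tsum_mul_right, tsum_mul_right]
  calc (0:ℂ)
      ≤ ∑' i : ℕ, ∑ j : Fin n, ∑ k : Fin n, (G i j k * N j k) * c j * conj (c k) := by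
        refine tsum_nonneg fun i => ?_
        exact hpos i c
    _ = ∑ j : Fin n, ∑ k : Fin n, ∑' i : ℕ, (G i j k * N j k) * c j * conj (c k) := by
        rw [Summable.tsum_finsetSum (f := fun j i => ∑ k : Fin n, (G i j k * N j k) * c j * conj (c k)) (fun j _ => summable_sum fun k _ => hFs j k)]
        exact Finset.sum_congr rfl fun j _ => Summable.tsum_finsetSum (fun k _ => hFs j k)
    _ = ∑ j : Fin n, ∑ k : Fin n, ((∑' i : ℕ, G i j k) * N j k) * c j * conj (c k) :=
        Finset.sum_congr rfl fun j _ => Finset.sum_congr rfl fun k _ => (h1 j k).symm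

private lemma factorB {n : ℕ} (σ : Fin n → ℂ)
    (h0 : ∀ j, 0 < (σ j).re) (h1 : ∀ j, (σ j).re < 1/2)
    (N : Fin n → Fin n → ℂ) (hN : ∀ d : Fin n → ℂ, 0 ≤ QF N d) (c : Fin n → ℂ) :
    0 ≤ QF (fun j k => Complex.Gamma (1 - (σ j + conj (σ k))) * N j k) c := by
  have hre : ∀ j k : Fin n, 0 < (1 - (σ j + conj (σ k))).re := by
    intro j k
    have := h1 j; have := h1 k
    simp only [Complex.sub_re, Complex.one_re, Complex.add_re, Complex.conj_re]
    linarith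
  have heq : ∀ j k : Fin n, EqOn
      (fun t : ℝ => ((Real.exp (-t) : ℝ) : ℂ) * ((t:ℂ) ^ (1 - (σ j + conj (σ k)) - 1)))
      (fun t : ℝ => ((Real.exp (-t) : ℝ) : ℂ) * ((t:ℂ) ^ (-σ j) * conj ((t:ℂ) ^ (-σ k))))
      (Ioi 0) := by
    intro j k t ht
    have ht' : (0:ℝ) < t := ht
    have htne : (t:ℂ) ≠ 0 := Complex.ofReal_ne_zero.mpr ht'.ne'
    simp only []
    rw [real_cpow_conj ht', ← Complex.cpow_add _ _ htne]
    congr 1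
    rw [map_neg]
    ring
  have key : ∀ j k : Fin n, Complex.Gamma (1 - (σ j + conj (σ k)))
      = ∫ t in Ioi (0:ℝ), ((Real.exp (-t) : ℝ) : ℂ) * ((t:ℂ) ^ (-σ j) * conj ((t:ℂ) ^ (-σ k))) := by
    intro j k
    rw [Complex.Gamma_eq_integral (hre j k), Complex.GammaIntegral]
    exact setIntegral_congr_fun measurableSet_Ioi (heq j k)
  have hint : ∀ j k : Fin n, IntegrableOn
      (fun t : ℝ => ((Real.exp (-t) : ℝ) : ℂ) * ((t:ℂ) ^ (-σ j) * conj ((t:ℂ) ^ (-σ k))))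
      (Ioi 0) volume := by
    intro j k
    exact (Complex.GammaIntegral_convergent (hre j k)).congr_fun (heq j k) measurableSet_Ioi
  have h := QFstep N hN (fun t => Real.exp (-t)) (fun t _ => (Real.exp_pos _).le)
    (fun j t => (t:ℂ) ^ (-σ j)) hint c
  refine le_of_le_of_eq h ?_
  unfold QF
  refine Finset.sum_congr rfl fun j _ => Finset.sum_congr rfl fun k _ => ?_
  dsimp only
  rw [← key j k]

private lemma intOn {z : ℂ} (hz : 0 < z.re) {r : ℝ} (hr : 0 < r) :
    IntegrableOn (fun t : ℝ => (t:ℂ) ^ (z - 1) * Complex.exp (-((r:ℂ) * (t:ℂ)))) (Ioi 0) volume := by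
  have h := Complex.GammaIntegral_convergent hz
  rw [← mul_zero r, ← integrableOn_Ioi_comp_mul_left_iff _ _ hr] at h
  refine (IntegrableOn.congr_fun (h.const_mul ((1 / (r:ℂ)) ^ (z - 1)))
    (fun t (ht : 0 < t) => ?_) measurableSet_Ioi)
  have hE : ((Real.exp (-(r*t)) : ℝ) : ℂ) = Complex.exp (-((r:ℂ)*(t:ℂ))) := by
    rw [Complex.ofReal_exp]
    norm_cast
  rw [Complex.ofReal_mul, mul_cpow_ofReal_nonneg hr.le ht.le, hE, one_div,
    Complex.inv_cpow _ _ (by rw [Complex.arg_ofReal_of_nonneg hr.le]; exact Ne.symm Real.pi_ne_zero)]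
  have hrne : ((r:ℂ)) ^ (z-1) ≠ 0 := by
    rw [Ne, Complex.cpow_eq_zero_iff, not_and_or]
    exact Or.inl (Complex.ofReal_ne_zero.mpr hr.ne')
  field_simp

private lemma factorA {n : ℕ} (p : ℕ) (hp : 1 ≤ p) (σ : Fin n → ℂ)
    (h0 : ∀ j, 0 < (σ j).re)
    (N : Fin n → Fin n → ℂ) (hN : ∀ d : Fin n → ℂ, 0 ≤ QF N d) (c : Fin n → ℂ) :
    0 ≤ QF (fun j k => (Complex.Gamma ((p:ℂ) + (σ j + conj (σ k)))
        * riemannZeta ((p:ℂ) + (σ j + conj (σ k)))) * N j k) c := by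
  set z : Fin n → Fin n → ℂ := fun j k => (p:ℂ) + (σ j + conj (σ k)) with hzdef
  have hz1 : ∀ j k, 1 < (z j k).re := by
    intro j k
    have := h0 j; have := h0 k
    have hp' : (1:ℝ) ≤ (p:ℝ) := by exact_mod_cast hp
    simp only [hzdef, Complex.add_re, Complex.natCast_re, Complex.conj_re]
    linarith
  have hz0 : ∀ j k, 0 < (z j k).re := fun j k => lt_trans one_pos (hz1 j k)
  set G : ℕ → Fin n → Fin n → ℂ :=
    fun i j k => Complex.Gamma (z j k) * (1 / ((i:ℂ) + 1) ^ (z j k)) with hGdef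
  have hzeta : ∀ j k, Complex.Gamma (z j k) * riemannZeta (z j k) = ∑' i : ℕ, G i j k := by
    intro j k
    rw [zeta_eq_tsum_one_div_nat_add_one_cpow (hz1 j k), ← tsum_mul_left]
  have hsum : ∀ j k, Summable fun i => G i j k := by
    intro j k
    refine Summable.mul_left _ ?_
    have h1 : Summable fun i : ℕ => 1 / (((i:ℕ)+1 : ℕ) : ℂ) ^ (z j k) :=
      (summable_nat_add_iff (f := fun n : ℕ => 1 / (n:ℂ) ^ (z j k)) 1).mpr
        ((Complex.summable_one_div_nat_cpow (p := z j k)).mpr (hz1 j k))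
    refine h1.congr fun i => ?_
    push_cast
    ring_nf
  have heqA : ∀ (i : ℕ) (j k : Fin n), EqOn
      (fun t : ℝ => (t:ℂ) ^ (z j k - 1) * Complex.exp (-((((i:ℝ)+1 : ℝ):ℂ) * (t:ℂ))))
      (fun t : ℝ => ((Real.exp (-(((i:ℝ)+1) * t)) * t ^ ((p:ℝ)-1) : ℝ) : ℂ)
        * ((t:ℂ) ^ (σ j) * conj ((t:ℂ) ^ (σ k)))) (Ioi 0) := by
    intro i j k t ht
    have ht' : (0:ℝ) < t := ht
    have htne : (t:ℂ) ≠ 0 := Complex.ofReal_ne_zero.mpr ht'.ne'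
    have hE : ((Real.exp (-(((i:ℝ)+1) * t)) : ℝ) : ℂ)
        = Complex.exp (-((((i:ℝ)+1 : ℝ):ℂ) * (t:ℂ))) := by
      rw [Complex.ofReal_exp]
      norm_cast
    have e1 : ((t:ℂ)) ^ (z j k - 1)
        = (t:ℂ) ^ ((((p:ℝ)-1 : ℝ)):ℂ) * ((t:ℂ) ^ (σ j) * (t:ℂ) ^ (conj (σ k))) := by
      rw [← Complex.cpow_add _ _ htne, ← Complex.cpow_add _ _ htne]
      congr 1
      simp only [hzdef]
      push_cast
      ring
    simp only []
    rw [e1, Complex.ofReal_mul, hE, Complex.ofReal_cpow ht'.le, real_cpow_conj ht']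
    ring
  have hintA : ∀ (i : ℕ) (j k : Fin n), IntegrableOn
      (fun t : ℝ => ((Real.exp (-(((i:ℝ)+1) * t)) * t ^ ((p:ℝ)-1) : ℝ) : ℂ)
        * ((t:ℂ) ^ (σ j) * conj ((t:ℂ) ^ (σ k)))) (Ioi 0) volume := by
    intro i j k
    have hr : (0:ℝ) < (i:ℝ)+1 := by positivity
    exact (intOn (hz0 j k) hr).congr_fun (heqA i j k) measurableSet_Ioi
  have keyA : ∀ (i : ℕ) (j k : Fin n), G i j k
      = ∫ t in Ioi (0:ℝ), ((Real.exp (-(((i:ℝ)+1) * t)) * t ^ ((p:ℝ)-1) : ℝ) : ℂ)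
        * ((t:ℂ) ^ (σ j) * conj ((t:ℂ) ^ (σ k))) := by
    intro i j k
    have hr : (0:ℝ) < (i:ℝ)+1 := by positivity
    have := integral_cpow_mul_exp_neg_mul_Ioi (hz0 j k) hr
    rw [← setIntegral_congr_fun measurableSet_Ioi (heqA i j k), this, hGdef]
    simp only []
    have hXY : ((i:ℂ) + 1) = (((i:ℝ)+1 : ℝ) : ℂ) := by push_cast; ring
    simp only [one_div]
    rw [hXY, Complex.inv_cpow _ _
      (by rw [Complex.arg_ofReal_of_nonneg hr.le]; exact Ne.symm Real.pi_ne_zero)]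
    ring
  have hposA : ∀ (i : ℕ) (d : Fin n → ℂ), 0 ≤ QF (fun j k => G i j k * N j k) d := by
    intro i d
    have hg : ∀ t ∈ Ioi (0:ℝ), 0 ≤ Real.exp (-(((i:ℝ)+1) * t)) * t ^ ((p:ℝ)-1) := by
      intro t ht
      exact mul_nonneg (Real.exp_pos _).le (Real.rpow_nonneg (le_of_lt ht) _)
    have h := QFstep N hN (fun t => Real.exp (-(((i:ℝ)+1) * t)) * t ^ ((p:ℝ)-1)) hg
      (fun j t => (t:ℂ) ^ (σ j)) (hintA i) d
    refine le_of_le_of_eq h ?_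
    unfold QF
    refine Finset.sum_congr rfl fun j _ => Finset.sum_congr rfl fun k _ => ?_
    dsimp only
    rw [← keyA i j k]
  have h := QFtsum G N hsum hposA c
  refine le_of_le_of_eq h ?_
  unfold QF
  refine Finset.sum_congr rfl fun j _ => Finset.sum_congr rfl fun k _ => ?_
  dsimp only
  rw [← hzeta j k]

private lemma entry_eq (p : ℕ) (x y : ℂ) (hw : 0 < (x + y).re) :
    (Real.pi : ℂ) * (∏ i ∈ Finset.range p, (x + y + (i:ℂ))) * riemannZeta ((p:ℂ) + x + y)
      / Complex.sin ((Real.pi : ℂ) * (x + y))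
    = (Complex.Gamma ((p:ℂ) + (x + y)) * riemannZeta ((p:ℂ) + (x + y)))
        * Complex.Gamma (1 - (x + y)) := by
  set w := x + y with hwdef
  have hprod : ∀ q : ℕ, Complex.Gamma (w + (q:ℂ)) = (∏ i ∈ Finset.range q, (w + (i:ℂ))) * Complex.Gamma w := by
    intro q
    induction q with
    | zero => simp
    | succ q ih =>
      have hne : w + (q:ℂ) ≠ 0 := by
        intro h
        have := congrArg Complex.re h
        simp only [Complex.add_re, Complex.natCast_re, Complex.zero_re] at this
        have hq : (0:ℝ) ≤ (q:ℝ) := Nat.cast_nonneg q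
        linarith
      have h1 : w + ((q+1 : ℕ):ℂ) = (w + (q:ℂ)) + 1 := by push_cast; ring
      rw [h1, Complex.Gamma_add_one _ hne, ih, Finset.prod_range_succ]
      ring
  have h1 : Complex.Gamma ((p:ℂ) + w) = (∏ i ∈ Finset.range p, (w + (i:ℂ))) * Complex.Gamma w := by
    rw [add_comm]; exact hprod p
  have h2 : (Real.pi : ℂ) * (∏ i ∈ Finset.range p, (w + (i:ℂ))) * riemannZeta ((p:ℂ) + x + y)
      / Complex.sin ((Real.pi : ℂ) * w)
      = (∏ i ∈ Finset.range p, (w + (i:ℂ))) * riemannZeta ((p:ℂ) + x + y)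
        * ((Real.pi : ℂ) / Complex.sin ((Real.pi : ℂ) * w)) := by
    ring
  have h3 : ((p:ℂ) + x + y) = ((p:ℂ) + (x + y)) := by ring
  rw [h3] at h2 ⊢
  rw [h2, ← Complex.Gamma_mul_Gamma_one_sub w, h1]
  ring

set_option maxHeartbeats 1000000 in
/-- For `p_ℓ ∈ ℕ`, `p_ℓ ≥ 1`, and `s_{j,ℓ} ∈ ℂ` with `0 < Re(s_{j,ℓ}) < 1/2`, the matrix
with `(j,k)` entry `∏_{ℓ=1}^m π (w_{jk,ℓ})_{p_ℓ} ζ(p_ℓ + w_{jk,ℓ}) / sin(π w_{jk,ℓ})`,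
where `w_{jk,ℓ} = s_{j,ℓ} + conj s_{k,ℓ}` and `(w)_p = w(w+1)⋯(w+p-1)` is the shifted
factorial, is positive semidefinite. -/
theorem polygamma_zeta_matrix_posSemidef (m n : ℕ) (p : Fin m → ℕ) (hp : ∀ l, 1 ≤ p l)
    (s : Fin n → Fin m → ℂ)
    (hs0 : ∀ j l, 0 < (s j l).re) (hs1 : ∀ j l, (s j l).re < 1 / 2) :
    ∀ c : Fin n → ℂ,
      0 ≤ ∑ j : Fin n, ∑ k : Fin n,
        (∏ l : Fin m,
            (Real.pi : ℂ)
              * (∏ i ∈ Finset.range (p l), (s j l + (starRingEnd ℂ) (s k l) + (i : ℂ)))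
              * riemannZeta ((p l : ℂ) + s j l + (starRingEnd ℂ) (s k l))
              / Complex.sin ((Real.pi : ℂ) * (s j l + (starRingEnd ℂ) (s k l))))
          * c j * (starRingEnd ℂ) (c k) := by
  intro c
  have H : ∀ T : Finset (Fin m), ∀ d : Fin n → ℂ,
      0 ≤ QF (fun j k => ∏ l ∈ T,
        ((Real.pi : ℂ)
          * (∏ i ∈ Finset.range (p l), (s j l + (starRingEnd ℂ) (s k l) + (i : ℂ)))
          * riemannZeta ((p l : ℂ) + s j l + (starRingEnd ℂ) (s k l))
          / Complex.sin ((Real.pi : ℂ) * (s j l + (starRingEnd ℂ) (s k l))))) d := by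
    intro T
    induction T using Finset.induction_on with
    | empty =>
      intro d
      unfold QF
      simp only [Finset.prod_empty, one_mul]
      have hs : (∑ j : Fin n, d j) * conj (∑ k : Fin n, d k)
          = ∑ j : Fin n, ∑ k : Fin n, d j * conj (d k) := by
        rw [map_sum, Finset.sum_mul_sum]
      rw [← hs, Complex.mul_conj]
      rw [Complex.zero_le_real]
      exact Complex.normSq_nonneg _
    | @insert a T ha ih =>
      intro d
      have hw : ∀ j k : Fin n, 0 < (s j a + conj (s k a)).re := by
        intro j k
        have := hs0 j a; have := hs0 k a
        simp only [Complex.add_re, Complex.conj_re]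
        linarith
      have key : ∀ j k : Fin n, (∏ l ∈ insert a T,
            ((Real.pi : ℂ)
              * (∏ i ∈ Finset.range (p l), (s j l + (starRingEnd ℂ) (s k l) + (i : ℂ)))
              * riemannZeta ((p l : ℂ) + s j l + (starRingEnd ℂ) (s k l))
              / Complex.sin ((Real.pi : ℂ) * (s j l + (starRingEnd ℂ) (s k l)))))
          = (Complex.Gamma ((p a : ℂ) + (s j a + conj (s k a)))
              * riemannZeta ((p a : ℂ) + (s j a + conj (s k a))))
            * (Complex.Gamma (1 - (s j a + conj (s k a)))
              * (∏ l ∈ T,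
                ((Real.pi : ℂ)
                  * (∏ i ∈ Finset.range (p l), (s j l + (starRingEnd ℂ) (s k l) + (i : ℂ)))
                  * riemannZeta ((p l : ℂ) + s j l + (starRingEnd ℂ) (s k l))
                  / Complex.sin ((Real.pi : ℂ) * (s j l + (starRingEnd ℂ) (s k l)))))) := by
        intro j k
        rw [Finset.prod_insert ha, entry_eq (p a) (s j a) (conj (s k a)) (hw j k)]
        ring
      have hB := factorB (fun j => s j a) (fun j => hs0 j a) (fun j => hs1 j a) _ ih
      have hA := factorA (p a) (hp a) (fun j => s j a) (fun j => hs0 j a) _ hB d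
      refine le_of_le_of_eq hA ?_
      unfold QF
      refine Finset.sum_congr rfl fun j _ => Finset.sum_congr rfl fun k _ => ?_
      dsimp only
      rw [← key j k]
  exact H Finset.univ c
end

section
/- Let m, n ∈ ℕ, let a₁, …, a_m be real numbers with 0 < a_ℓ ≤ 1, and let s_{j,ℓ} ∈ ℂ with Re(s_{j,ℓ}) > 0 for all 1 ≤ j ≤ n, 1 ≤ ℓ ≤ m; assume w_{jk,ℓ} := s_{j,ℓ} + conj(s_{k,ℓ}) ≠ 1 for all j, k, ℓ. Then the n×n complex matrix whose (j,k) entry is ∏_{ℓ=1}^{m} ( (a_ℓ^{−w_{jk,ℓ}} + (1+a_ℓ)^{−w_{jk,ℓ}} − ζ(w_{jk,ℓ}, a_ℓ))/w_{jk,ℓ} + (1+a_ℓ)^{1−w_{jk,ℓ}} / (w_{jk,ℓ}(w_{jk,ℓ} − 1)) ) is positive semidefinite, where ζ(s, a) is the Hurwitz zeta function. -/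
open Complex ComplexOrder

/-!
For `Re w > 0`, `w ≠ 1`, the factor attached to `w = s + conj t` equals
`∫₁^∞ {x} (x+a)^{-w-1} dx`, and `(x+a)^{-w-1} = (x+a)^{-1} (x+a)^{-s} conj((x+a)^{-t})`.
Hence the matrix of one factor is an integral of rank-one matrices `v vᴴ` against the
nonnegative weight `{x}/(x+a)`, so positive semidefinite, and the product over `ℓ` is an
entrywise product, positive semidefinite by the Schur product theorem.

The integral formula holds for `Re w > 1` by integrating over the unit intervals `[n, n+1]`,
where `{x} = x - n` has an explicit antiderivative, and summing against the Hurwitz series.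
Both sides are holomorphic on the connected set `{Re w > 0} \ {1}`, the integral being a Mellin
transform, so the formula extends there.
-/

open MeasureTheory Set Filter Topology ComplexConjugate

namespace Matrix

variable {n 𝕜 : Type*} [Fintype n] [RCLike 𝕜]

theorem PosSemidef.sum_sum_mul_mul_star_nonneg {M : Matrix n n 𝕜} (hM : M.PosSemidef)
    (c : n → 𝕜) : 0 ≤ ∑ j, ∑ k, M j k * c j * star (c k) := by
  convert hM.dotProduct_mulVec_nonneg (star c) using 1
  simp only [dotProduct, mulVec, star_star, Pi.star_apply, Finset.mul_sum]
  exact Finset.sum_congr rfl fun j _ => Finset.sum_congr rfl fun k _ => by ring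

theorem PosSemidef.integral {X : Type*} [MeasurableSpace X] {μ : Measure X}
    {F : X → Matrix n n 𝕜} (hF : ∀ᵐ x ∂μ, (F x).PosSemidef)
    (hFi : ∀ i j, Integrable (fun x => F x i j) μ) :
    (of fun i j => ∫ x, F x i j ∂μ).PosSemidef := by
  refine .of_dotProduct_mulVec_nonneg ?_ fun c => ?_
  · ext i j
    rw [conjTranspose_apply, of_apply, of_apply, ← starRingEnd_apply, ← integral_conj]
    refine integral_congr_ae ?_
    filter_upwards [hF] with x hx
    exact hx.isHermitian.apply i j
  · calc star c ⬝ᵥ (of (fun i j => ∫ x, F x i j ∂μ) *ᵥ c)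
        = ∑ i, ∑ j, ∫ x, star (c i) * F x i j * c j ∂μ := by
          simp only [dotProduct, mulVec, of_apply, Finset.mul_sum, integral_mul_const,
            integral_const_mul, Pi.star_apply, mul_assoc]
      _ = ∫ x, ∑ i, ∑ j, star (c i) * F x i j * c j ∂μ := by
          have hint : ∀ i j, Integrable (fun x => star (c i) * F x i j * c j) μ :=
            fun i j => ((hFi i j).const_mul _).mul_const _
          rw [integral_finsetSum _ fun i _ => integrable_finsetSum _ fun j _ => hint i j]
          exact Finset.sum_congr rfl fun i _ => (integral_finsetSum _ fun j _ => hint i j).symm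
      _ = ∫ x, star c ⬝ᵥ (F x *ᵥ c) ∂μ := by
          simp only [dotProduct, mulVec, Finset.mul_sum, Pi.star_apply, mul_assoc]
      _ ≥ 0 := integral_nonneg_of_ae <| by
          filter_upwards [hF] with x hx using hx.dotProduct_mulVec_nonneg c

theorem PosSemidef.prod_hadamard {ι : Type*} (S : Finset ι) {A : ι → Matrix n n 𝕜}
    (hA : ∀ l ∈ S, (A l).PosSemidef) : (of fun i j => ∏ l ∈ S, A l i j).PosSemidef := by
  classical
  induction S using Finset.induction_on with
  | empty =>
    convert posSemidef_vecMulVec_self_star (fun _ : n => (1 : 𝕜)) using 1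
    ext i j; simp [vecMulVec_apply]
  | insert l S hl ih =>
    have hprod : (of fun i j => ∏ l ∈ insert l S, A l i j)
        = A l ⊙ of fun i j => ∏ l ∈ S, A l i j := by
      ext i j; simp [Finset.prod_insert hl]
    rw [hprod]
    exact (hA l (Finset.mem_insert_self l S)).hadamard
      (ih fun l' hl' => hA l' (Finset.mem_insert_of_mem hl'))

end Matrix

section ShiftedPower

variable {a : ℝ}

lemma ofReal_add_mem_slitPlane {x : ℝ} (hx : 0 < x + a) : (x : ℂ) + a ∈ slitPlane := by
  simpa using ofReal_mem_slitPlane.mpr hx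

lemma norm_ofReal_add_cpow {x : ℝ} (hx : 0 < x + a) (r : ℂ) :
    ‖((x : ℂ) + a) ^ r‖ = (x + a) ^ r.re := by
  rw [← ofReal_add, norm_cpow_eq_rpow_re_of_pos hx]

lemma hasDerivAt_ofReal_add_cpow (r : ℂ) {x : ℝ} (hx : 0 < x + a) :
    HasDerivAt (fun y : ℝ => ((y : ℂ) + a) ^ r) (r * ((x : ℂ) + a) ^ (r - 1)) x := by
  simpa using (((hasDerivAt_id (x : ℂ)).add_const (a : ℂ)).cpow_const
    (ofReal_add_mem_slitPlane hx)).comp_ofReal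

lemma continuousOn_ofReal_add_cpow (r : ℂ) {s : Set ℝ} (hs : ∀ x ∈ s, 0 < x + a) :
    ContinuousOn (fun x : ℝ => ((x : ℂ) + a) ^ r) s :=
  fun x hx => (hasDerivAt_ofReal_add_cpow r (hs x hx)).continuousAt.continuousWithinAt

end ShiftedPower

lemma isPreconnected_re_pos_diff_one : IsPreconnected ({z : ℂ | 0 < z.re} \ {1}) := by
  have hU : {z : ℂ | 0 < z.re} \ {1} =
      (({z | 0 < z.re} ∩ {z | 0 < z.im}) ∪ ({z | 0 < z.re} ∩ {z | z.re < 1})) ∪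
        (({z | 0 < z.re} ∩ {z | z.im < 0}) ∪ {z | 1 < z.re}) := by
    ext z
    simp only [Set.mem_sdiff, mem_union, mem_inter_iff, Set.mem_ofPred_eq, mem_singleton_iff,
      Complex.ext_iff, one_re, one_im]
    grind
  rw [hU]
  refine .union ⟨1 / 2, -1⟩ (.inr ⟨by norm_num, by norm_num⟩) (.inl ⟨by norm_num, by norm_num⟩)
    (.union ⟨1 / 2, 1⟩ ⟨by norm_num, by norm_num⟩ ⟨by norm_num, by norm_num⟩ ?_ ?_)
    (.union ⟨2, -1⟩ ⟨by norm_num, by norm_num⟩ (show (1 : ℝ) < 2 by norm_num) ?_ ?_)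
  · exact ((convex_halfSpace_re_gt 0).inter (convex_halfSpace_im_gt 0)).isPreconnected
  · exact ((convex_halfSpace_re_gt 0).inter (convex_halfSpace_re_lt 1)).isPreconnected
  · exact ((convex_halfSpace_re_gt 0).inter (convex_halfSpace_im_lt 0)).isPreconnected
  · exact (convex_halfSpace_re_gt 1).isPreconnected

namespace HurwitzZeta

noncomputable def fractKernel (a : ℝ) (w : ℂ) (x : ℝ) : ℂ :=
  ((Int.fract x : ℝ) : ℂ) * ((x : ℂ) + a) ^ (-w - 1)

noncomputable def eulerRemainder (a : ℝ) (w : ℂ) : ℂ :=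
  ((a : ℂ) ^ (-w) + (1 + (a : ℂ)) ^ (-w) - hurwitzZeta a w) / w
    + (1 + (a : ℂ)) ^ (1 - w) / (w * (w - 1))

variable {a : ℝ} {w : ℂ}

lemma norm_fractKernel_le (ha : 0 ≤ a) (hw : 0 ≤ w.re) {x : ℝ} (hx : 1 ≤ x) :
    ‖fractKernel a w x‖ ≤ x ^ (-w.re - 1) := by
  have hxa : 0 < x + a := by linarith
  rw [fractKernel, norm_mul, norm_ofReal_add_cpow hxa, norm_real, Real.norm_of_nonneg
    (Int.fract_nonneg x)]
  calc Int.fract x * (x + a) ^ (-w - 1).re ≤ 1 * x ^ (-w.re - 1) := by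
        refine mul_le_mul (Int.fract_lt_one x).le ?_ (by positivity) zero_le_one
        simp only [sub_re, neg_re, one_re]
        exact Real.rpow_le_rpow_of_nonpos (by linarith) (by linarith) (by linarith)
    _ = x ^ (-w.re - 1) := one_mul _

lemma integrableOn_fractKernel (ha : 0 ≤ a) (hw : 0 < w.re) :
    IntegrableOn (fractKernel a w) (Ioi 1) := by
  refine Integrable.mono' (integrableOn_Ioi_rpow_of_lt (by linarith) one_pos) ?_
    ((ae_restrict_iff' measurableSet_Ioi).mpr <| .of_forall fun x hx =>
      norm_fractKernel_le ha hw.le (le_of_lt hx))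
  refine .mul (measurable_ofReal.comp measurable_fract).aestronglyMeasurable ?_
  exact (continuousOn_ofReal_add_cpow _ fun x (hx : 1 < x) => by linarith)
    |>.aestronglyMeasurable measurableSet_Ioi

lemma hasDerivAt_fractKernel_antideriv (c : ℝ) (hw0 : w ≠ 0) (hw1 : w ≠ 1) {x : ℝ}
    (hx : 0 < x + a) :
    HasDerivAt (fun y : ℝ => -(((y : ℂ) - c) * ((y : ℂ) + a) ^ (-w)) / w
        + ((y : ℂ) + a) ^ (1 - w) / (w * (1 - w)))
      (((x : ℂ) - c) * ((x : ℂ) + a) ^ (-w - 1)) x := by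
  have hX : (x : ℂ) + a ≠ 0 := slitPlane_ne_zero (ofReal_add_mem_slitPlane hx)
  have hlin : HasDerivAt (fun y : ℝ => (y : ℂ) - c) 1 x :=
    (hasDerivAt_id x).ofReal_comp.sub_const _
  have := ((hlin.mul (hasDerivAt_ofReal_add_cpow (-w) hx)).neg.div_const w).add
    ((hasDerivAt_ofReal_add_cpow (1 - w) hx).div_const (w * (1 - w)))
  refine this.congr_deriv ?_
  have hsplit : ((x : ℂ) + a) ^ (-w) = ((x : ℂ) + a) ^ (-w - 1) * ((x : ℂ) + a) := by
    have := cpow_add (-w - 1) 1 hX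
    rwa [sub_add_cancel, cpow_one] at this
  rw [show (1 : ℂ) - w - 1 = -w by ring, hsplit]
  have : (1 : ℂ) - w ≠ 0 := sub_ne_zero.mpr (Ne.symm hw1)
  field_simp
  ring

lemma intervalIntegral_fractKernel_unit (ha : 0 ≤ a) (hw : 0 < w.re) (hw1 : w ≠ 1) (n : ℕ) :
    ∫ x in (n + 1 : ℝ)..(n + 2), fractKernel a w x
      = -(n + 2 + a : ℂ) ^ (-w) / w
        + ((n + 2 + a : ℂ) ^ (1 - w) - (n + 1 + a : ℂ) ^ (1 - w)) / (w * (1 - w)) := by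
  have hw0 : w ≠ 0 := fun h => by simp [h] at hw
  have hn : (0 : ℝ) ≤ n := n.cast_nonneg
  have hpos : ∀ x ∈ Icc (n + 1 : ℝ) (n + 2), 0 < x + a := fun x hx => by linarith [hx.1]
  have hle : (n + 1 : ℝ) ≤ n + 2 := by linarith
  rw [intervalIntegral.integral_eq_sub_of_hasDerivAt_of_le hle
    (fun x hx => (hasDerivAt_fractKernel_antideriv (n + 1) hw0 hw1
      (hpos x hx)).continuousAt.continuousWithinAt)
    (fun x hx => ?_)
    ((intervalIntegrable_iff_integrableOn_Ioc_of_le hle).mpr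
      ((integrableOn_fractKernel ha hw).mono_set fun x hx => by
        show 1 < x; linarith [hx.1]))]
  · simp only [sub_self, zero_mul, neg_zero, zero_div, zero_add, ofReal_add, ofReal_natCast,
      ofReal_one, ofReal_ofNat]
    ring_nf
  · have hfract : Int.fract x = x - (n + 1 : ℝ) := by
      rw [Int.fract_eq_iff]
      exact ⟨by linarith [hx.1], by linarith [hx.2], n + 1, by push_cast; ring⟩
    rw [fractKernel, hfract, ofReal_sub]
    exact hasDerivAt_fractKernel_antideriv _ hw0 hw1 (hpos x (Ioo_subset_Icc_self hx))

lemma intervalIntegral_fractKernel_one_natCast (ha : 0 ≤ a) (hw : 0 < w.re) (hw1 : w ≠ 1)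
    (N : ℕ) :
    ∫ x in (1 : ℝ)..(N + 1), fractKernel a w x
      = -(∑ n ∈ Finset.range N, (n + 2 + a : ℂ) ^ (-w)) / w
        + ((N + 1 + a : ℂ) ^ (1 - w) - (1 + a : ℂ) ^ (1 - w)) / (w * (1 - w)) := by
  have hint : ∀ b c : ℝ, 1 ≤ b → 1 ≤ c → IntervalIntegrable (fractKernel a w) volume b c :=
    fun b c hb hc => intervalIntegrable_iff.mpr <| (integrableOn_fractKernel ha hw).mono_set
      fun x hx => (le_min hb hc).trans_lt hx.1
  induction N with
  | zero => simp
  | succ N ih =>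
    have hN : (1 : ℝ) ≤ N + 1 := le_add_of_nonneg_left N.cast_nonneg
    rw [← intervalIntegral.integral_add_adjacent_intervals (hint _ _ le_rfl hN)
      (hint _ _ hN (by push_cast; linarith)), ih]
    push_cast
    rw [show (N + 1 + 1 : ℝ) = N + 2 by ring, intervalIntegral_fractKernel_unit ha hw hw1,
      Finset.sum_range_succ]
    rw [show (N + 1 + 1 + a : ℂ) = N + 2 + a by ring]
    ring

lemma tendsto_natCast_add_cpow_one_sub (ha : 0 ≤ a) (hw : 1 < w.re) :
    Tendsto (fun N : ℕ => (N + 1 + a : ℂ) ^ (1 - w)) atTop (𝓝 0) := by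
  rw [tendsto_zero_iff_norm_tendsto_zero]
  have hnorm : ∀ N : ℕ,
      ‖(N + 1 + a : ℂ) ^ (1 - w)‖ = ((N + 1 : ℝ) + a) ^ (-(w.re - 1)) := by
    intro N
    have h := norm_ofReal_add_cpow (a := a) (x := N + 1) (by positivity) (1 - w)
    push_cast at h
    rw [h, sub_re, one_re, neg_sub]
  simp only [hnorm]
  exact (tendsto_rpow_neg_atTop (by linarith)).comp <| tendsto_atTop_add_const_right _ a <|
    tendsto_atTop_add_const_right _ 1 tendsto_natCast_atTop_atTop

lemma integral_fractKernel_eq_of_one_lt_re (ha0 : 0 < a) (ha1 : a ≤ 1) (hw : 1 < w.re) :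
    ∫ x in Ioi 1, fractKernel a w x = eulerRemainder a w := by
  have hw1 : w ≠ 1 := fun h => by norm_num [h] at hw
  have hint := integrableOn_fractKernel ha0.le (w := w) (by linarith)
  have hpartial := intervalIntegral_tendsto_integral_Ioi 1 hint
    (tendsto_atTop_add_const_right _ 1 tendsto_natCast_atTop_atTop)
  simp only [intervalIntegral_fractKernel_one_natCast ha0.le (by linarith) hw1] at hpartial
  have htail : HasSum (fun n : ℕ => (n + 2 + a : ℂ) ^ (-w))
      (hurwitzZeta a w - (a : ℂ) ^ (-w) - (1 + a : ℂ) ^ (-w)) := by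
    have := (hasSum_nat_add_iff' 2).mpr (hasSum_hurwitzZeta_of_one_lt_re ⟨ha0.le, ha1⟩ hw)
    simp only [Finset.sum_range_succ, Finset.sum_range_zero, one_div, ← cpow_neg] at this
    push_cast at this
    rwa [zero_add, zero_add, ← sub_sub] at this
  refine tendsto_nhds_unique hpartial ?_
  convert (htail.tendsto_sum_nat.neg.div_const w).add
    (((tendsto_natCast_add_cpow_one_sub ha0.le hw).sub_const ((1 + a : ℂ) ^ (1 - w))).div_const
      (w * (1 - w))) using 2
  rw [eulerRemainder]
  field_simp
  ring

/-- After the substitution `t = x + a`, `∫ x in Ioi 1, fractKernel a w x` is the Mellin transform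
of this function at `-w`; it vanishes on `(0, 1 + a]`, which makes that transform holomorphic on
all of `Re w > 0`. -/
noncomputable def fractShift (a : ℝ) : ℝ → ℂ :=
  (Ioi (1 + a)).indicator fun t => ((Int.fract (t - a) : ℝ) : ℂ)

lemma norm_fractShift_le (a t : ℝ) : ‖fractShift a t‖ ≤ 1 := by
  by_cases ht : t ∈ Ioi (1 + a)
  · rw [fractShift, indicator_of_mem ht, norm_real, Real.norm_of_nonneg (Int.fract_nonneg _)]
    exact (Int.fract_lt_one _).le
  · simp [fractShift, indicator_of_notMem ht]

lemma mellin_fractShift (ha : 0 ≤ a) (w : ℂ) :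
    mellin (fractShift a) (-w) = ∫ x in Ioi 1, fractKernel a w x := by
  have hshift := (measurePreserving_add_right volume a).setIntegral_preimage_emb
    (measurableEmbedding_addRight a)
    (fun t : ℝ => (t : ℂ) ^ (-w - 1) * ((Int.fract (t - a) : ℝ) : ℂ)) (Ioi (1 + a))
  rw [preimage_add_const_Ioi, add_sub_cancel_right] at hshift
  rw [mellin, fractShift]
  simp_rw [← indicator_smul_apply (Ioi (1 + a)) fun t : ℝ => (t : ℂ) ^ (-w - 1)]
  rw [setIntegral_indicator measurableSet_Ioi, Ioi_inter_Ioi, sup_of_le_right (by linarith)]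
  simp only [smul_eq_mul]
  rw [← hshift]
  refine setIntegral_congr_fun measurableSet_Ioi fun x _ => ?_
  simp only [fractKernel, add_sub_cancel_right, ofReal_add]
  ring

lemma differentiableAt_integral_fractKernel (ha : 0 ≤ a) (hw : 0 < w.re) :
    DifferentiableAt ℂ (fun w => ∫ x in Ioi 1, fractKernel a w x) w := by
  have hmeas : Measurable (fractShift a) :=
    (measurable_ofReal.comp ((measurable_id.sub_const a).fract)).indicator measurableSet_Ioi
  have hloc : LocallyIntegrableOn (fractShift a) (Ioi 0) :=
    ((memLp_top_of_bound hmeas.aestronglyMeasurable 1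
      (ae_of_all _ (norm_fractShift_le a))).locallyIntegrable le_top).locallyIntegrableOn _
  have htop : fractShift a =O[atTop] (· ^ (-(0 : ℝ))) :=
    .of_bound 1 <| .of_forall fun t => by simpa using norm_fractShift_le a t
  have hzero : fractShift a =O[𝓝[>] 0] (· ^ (-(-w.re - 1))) := by
    refine EventuallyEq.trans_isBigO ?_ (Asymptotics.isBigO_zero _ _)
    filter_upwards [nhdsWithin_le_nhds (Iio_mem_nhds (by linarith : (0 : ℝ) < 1 + a))]
      with t ht using indicator_of_notMem (not_lt.mpr (le_of_lt ht)) _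
  have hmellin := mellin_differentiableAt_of_isBigO_rpow (s := -w) hloc htop
    (by simpa using hw) hzero (by simp)
  rw [show (fun w => ∫ x in Ioi 1, fractKernel a w x) = fun w => mellin (fractShift a) (-w) from
    funext fun w => (mellin_fractShift ha w).symm]
  exact hmellin.comp w differentiableAt_id.neg

lemma differentiableAt_eulerRemainder (ha : 0 < a) (hw0 : w ≠ 0) (hw1 : w ≠ 1) :
    DifferentiableAt ℂ (eulerRemainder a) w := by
  have ha' : (a : ℂ) ≠ 0 := ofReal_ne_zero.mpr ha.ne'
  have ha1 : (1 + a : ℂ) ≠ 0 := by exact_mod_cast (by linarith : (1 + a : ℝ) ≠ 0)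
  have hζ := differentiableAt_hurwitzZeta a hw1
  have hseries : DifferentiableAt ℂ
      (fun w => (a : ℂ) ^ (-w) + (1 + (a : ℂ)) ^ (-w) - hurwitzZeta a w) w :=
    ((differentiableAt_id.neg.const_cpow (.inl ha')).add
      (differentiableAt_id.neg.const_cpow (.inl ha1))).sub hζ
  have hpow : DifferentiableAt ℂ (fun w => (1 + (a : ℂ)) ^ (1 - w)) w :=
    ((differentiableAt_const _).sub differentiableAt_id).const_cpow (.inl ha1)
  exact (hseries.div differentiableAt_id hw0).add <|
    hpow.div (differentiableAt_id.mul (differentiableAt_id.sub_const 1))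
      (mul_ne_zero hw0 (sub_ne_zero.mpr hw1))

theorem integral_fractKernel_eq (ha0 : 0 < a) (ha1 : a ≤ 1) (hw : 0 < w.re) (hw1 : w ≠ 1) :
    ∫ x in Ioi 1, fractKernel a w x = eulerRemainder a w := by
  have hU : IsOpen ({z : ℂ | 0 < z.re} \ {1}) :=
    (isOpen_lt continuous_const continuous_re).sdiff isClosed_singleton
  have hF : AnalyticOnNhd ℂ (fun w => ∫ x in Ioi 1, fractKernel a w x) ({z | 0 < z.re} \ {1}) :=
    DifferentiableOn.analyticOnNhd (fun z hz =>
      (differentiableAt_integral_fractKernel ha0.le hz.1).differentiableWithinAt) hU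
  have hG : AnalyticOnNhd ℂ (eulerRemainder a) ({z | 0 < z.re} \ {1}) :=
    DifferentiableOn.analyticOnNhd (fun z hz => (differentiableAt_eulerRemainder ha0
      (fun h => by simp [h] at hz) hz.2).differentiableWithinAt) hU
  have hseed : (fun w => ∫ x in Ioi 1, fractKernel a w x) =ᶠ[𝓝 2] eulerRemainder a := by
    filter_upwards [(isOpen_lt continuous_const continuous_re).mem_nhds
      (show (1 : ℝ) < (2 : ℂ).re by norm_num)] with z hz
    exact integral_fractKernel_eq_of_one_lt_re ha0 ha1 hz
  exact hF.eqOn_of_preconnected_of_eventuallyEq hG isPreconnected_re_pos_diff_one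
    ⟨by norm_num, by norm_num⟩ hseed ⟨hw, hw1⟩

lemma fractKernel_add_conj (s t : ℂ) {x : ℝ} (hx : 0 < x + a) :
    fractKernel a (s + conj t) x
      = ((Int.fract x / (x + a) : ℝ) : ℂ)
          * (((x : ℂ) + a) ^ (-s) * conj (((x : ℂ) + a) ^ (-t))) := by
  rw [← ofReal_add]
  have hX : ((x + a : ℝ) : ℂ) ≠ 0 := ofReal_ne_zero.mpr hx.ne'
  have hconj : conj (((x + a : ℝ) : ℂ) ^ (-t)) = ((x + a : ℝ) : ℂ) ^ (-conj t) := by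
    rw [← map_neg, cpow_conj _ _ (by rw [arg_ofReal_of_nonneg hx.le]; exact Real.pi_ne_zero.symm),
      conj_ofReal]
  rw [hconj, fractKernel, ← ofReal_add, ← cpow_add _ _ hX, ofReal_div, div_eq_mul_inv,
    ← cpow_neg_one, mul_assoc, ← cpow_add _ _ hX]
  ring_nf

lemma posSemidef_fractKernel {ι : Type*} [Fintype ι] (s : ι → ℂ) {x : ℝ} (hx : 0 < x + a) :
    (Matrix.of fun j k => fractKernel a (s j + conj (s k)) x).PosSemidef := by
  have hrank_one : (Matrix.of fun j k => fractKernel a (s j + conj (s k)) x)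
      = ((Int.fract x / (x + a) : ℝ) : ℂ) •
          Matrix.vecMulVec (fun j => ((x : ℂ) + a) ^ (-s j))
            (star fun j => ((x : ℂ) + a) ^ (-s j)) := by
    ext j k
    simp [fractKernel_add_conj _ _ hx, Matrix.vecMulVec_apply]
  rw [hrank_one]
  exact (Matrix.posSemidef_vecMulVec_self_star _).smul
    (zero_le_real.mpr (div_nonneg (Int.fract_nonneg x) hx.le))

theorem posSemidef_eulerRemainder {ι : Type*} [Fintype ι] (ha0 : 0 < a) (ha1 : a ≤ 1)
    {s : ι → ℂ} (hs : ∀ j, 0 < (s j).re) (hne : ∀ j k, s j + conj (s k) ≠ 1) :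
    (Matrix.of fun j k => eulerRemainder a (s j + conj (s k))).PosSemidef := by
  have hre : ∀ j k, 0 < (s j + conj (s k)).re := fun j k => by
    simpa using add_pos (hs j) (hs k)
  have hintegral : (Matrix.of fun j k => eulerRemainder a (s j + conj (s k)))
      = Matrix.of fun j k => ∫ x in Ioi 1, fractKernel a (s j + conj (s k)) x := by
    ext j k
    exact (integral_fractKernel_eq ha0 ha1 (hre j k) (hne j k)).symm
  rw [hintegral]
  exact .integral ((ae_restrict_iff' measurableSet_Ioi).mpr <| .of_forall fun x (hx : 1 < x) =>
      posSemidef_fractKernel s (by linarith))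
    fun j k => integrableOn_fractKernel ha0.le (hre j k)

end HurwitzZeta

/-- For real `0 < a_ℓ ≤ 1` and `s_{j,ℓ} ∈ ℂ` with `Re(s_{j,ℓ}) > 0` and
`w_{jk,ℓ} := s_{j,ℓ} + conj s_{k,ℓ} ≠ 1`, the matrix with `(j,k)` entry
`∏_ℓ ((a_ℓ^{-w} + (1+a_ℓ)^{-w} - ζ(w, a_ℓ))/w + (1+a_ℓ)^{1-w}/(w(w-1)))` (with
`w = w_{jk,ℓ}`) is positive semidefinite, where `ζ(s, a)` is the Hurwitz zeta function. -/
theorem hurwitzZeta_matrix_posSemidef (m n : ℕ) (a : Fin m → ℝ)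
    (ha0 : ∀ l, 0 < a l) (ha1 : ∀ l, a l ≤ 1)
    (s : Fin n → Fin m → ℂ) (hs : ∀ j l, 0 < (s j l).re)
    (hne : ∀ j k l, s j l + (starRingEnd ℂ) (s k l) ≠ 1) :
    ∀ c : Fin n → ℂ,
      0 ≤ ∑ j : Fin n, ∑ k : Fin n,
        (∏ l : Fin m,
            (((a l : ℂ) ^ (-(s j l + (starRingEnd ℂ) (s k l)))
                + (1 + (a l : ℂ)) ^ (-(s j l + (starRingEnd ℂ) (s k l)))
                - HurwitzZeta.hurwitzZeta (↑(a l) : UnitAddCircle)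
                    (s j l + (starRingEnd ℂ) (s k l)))
                / (s j l + (starRingEnd ℂ) (s k l))
              + (1 + (a l : ℂ)) ^ (1 - (s j l + (starRingEnd ℂ) (s k l)))
                / ((s j l + (starRingEnd ℂ) (s k l))
                    * (s j l + (starRingEnd ℂ) (s k l) - 1))))
          * c j * (starRingEnd ℂ) (c k) := by
  have hprod := Matrix.PosSemidef.prod_hadamard Finset.univ fun l _ =>
    HurwitzZeta.posSemidef_eulerRemainder (ha0 l) (ha1 l) (s := fun j => s j l)
      (fun j => hs j l) (fun j k => hne j k l)
  exact hprod.sum_sum_mul_mul_star_nonneg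
end

section
/- Let m, n ∈ ℕ, let a₁, …, a_m be real numbers with 0 < a_ℓ ≤ 1, and let s_{j,ℓ} ∈ ℂ with Re(s_{j,ℓ}) > 0 for all 1 ≤ j ≤ n, 1 ≤ ℓ ≤ m; assume w_{jk,ℓ} := s_{j,ℓ} + conj(s_{k,ℓ}) ≠ 1 for all j, k, ℓ. Then the n×n complex matrix whose (j,k) entry is ∏_{ℓ=1}^{m} Γ(w_{jk,ℓ}) ( ζ(w_{jk,ℓ}, (a_ℓ+1)/4) − ζ(w_{jk,ℓ}, (a_ℓ+3)/4) ) is positive semidefinite, where Γ is the Gamma function and ζ(s, a) is the Hurwitz zeta function. -/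
/-!
Put `b = (a + 1) / 4`. The kernel `ψ_b(t) = e^{-bt} / (1 + e^{-t/2})`, for which
`ψ_b(4x) = e^{-ax} / (2 cosh x)` is the paper's kernel, expands as `∑ₖ (-1)ᵏ e^{-(k/2 + b) t}`.
Hence its Mellin transform is `Γ(w) (ζ(w, b) - ζ(w, b + 1/2))` for `Re w > 1`, and by analytic
continuation for `Re w > 0`. Since `ψ_b ≥ 0`, the matrix `M` of its Mellin transforms at
`s_j + conj s_k` is a Gram matrix: `∑ M_{jk} c_j c̄_k = ∫ |∑ⱼ c_j t^{s_j}|² ψ_b(t) dt / t ≥ 0`.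
The matrix of the theorem is the entrywise product of such matrices over `ℓ`, hence positive
semidefinite by the Schur product theorem.
-/

open Complex ComplexOrder
open Filter Topology Set MeasureTheory HurwitzZeta ComplexConjugate

lemma Complex.ofReal_cpow_conj {t : ℝ} (ht : 0 ≤ t) (w : ℂ) :
    (t : ℂ) ^ conj w = conj ((t : ℂ) ^ w) := by
  rw [cpow_conj _ _ (by rw [arg_ofReal_of_nonneg ht]; exact Real.pi_ne_zero.symm), conj_ofReal]

lemma mellin_ofReal_conj (f : ℝ → ℝ) (s : ℂ) :
    mellin (fun t => (f t : ℂ)) (conj s) = conj (mellin (fun t => (f t : ℂ)) s) := by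
  rw [mellin, mellin, ← integral_conj]
  refine setIntegral_congr_fun measurableSet_Ioi fun t (ht : 0 < t) => ?_
  rw [smul_eq_mul, smul_eq_mul, map_mul, conj_ofReal, ← ofReal_cpow_conj ht.le, map_sub, map_one]

open Matrix in
theorem posSemidef_mellin_add_conj {ι : Type*} [Fintype ι] {f : ℝ → ℝ}
    (hf : ∀ t > 0, 0 ≤ f t) (s : ι → ℂ)
    (hconv : ∀ j k, MellinConvergent (fun t => (f t : ℂ)) (s j + conj (s k))) :
    (of fun j k => mellin (fun t => (f t : ℂ)) (s j + conj (s k))).PosSemidef := by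
  rw [posSemidef_iff_dotProduct_mulVec]
  refine ⟨?_, fun x => ?_⟩
  · ext j k
    rw [conjTranspose_apply, of_apply, of_apply, star_def, ← mellin_ofReal_conj, map_add,
      conj_conj, add_comm]
  have h_pointwise : ∀ t > (0 : ℝ), ∑ j, star (x j) * ∑ k,
      (t : ℂ) ^ (s j + conj (s k) - 1) • (f t : ℂ) * x k =
      ((normSq (∑ k, x k * (t : ℂ) ^ conj (s k)) * (f t / t) : ℝ) : ℂ) := by
    intro t ht
    have ht' : (t : ℂ) ≠ 0 := ofReal_ne_zero.mpr ht.ne'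
    rw [ofReal_mul, normSq_eq_conj_mul_self, map_sum, Finset.sum_mul, Finset.sum_mul]
    refine Finset.sum_congr rfl fun j _ => ?_
    simp only [Finset.mul_sum, Finset.sum_mul]
    refine Finset.sum_congr rfl fun k _ => ?_
    simp only [cpow_sub _ _ ht', cpow_add _ _ ht', cpow_one, map_mul, ofReal_cpow_conj ht.le,
      conj_conj, star_def, smul_eq_mul, ofReal_div]
    ring
  have h_int : ∀ j k, IntegrableOn
      (fun t : ℝ => star (x j) * ((t : ℂ) ^ (s j + conj (s k) - 1) • (f t : ℂ) * x k)) (Ioi 0) :=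
    fun j k => ((hconv j k).mul_const (x k)).const_mul (star (x j))
  calc (0 : ℂ)
      ≤ ((∫ t in Ioi (0 : ℝ), normSq (∑ k, x k * (t : ℂ) ^ conj (s k)) * (f t / t) : ℝ) : ℂ) :=
        zero_le_real.mpr <| setIntegral_nonneg measurableSet_Ioi fun t (ht : 0 < t) =>
          mul_nonneg (normSq_nonneg _) (div_nonneg (hf t ht) ht.le)
    _ = ∫ t in Ioi (0 : ℝ),
          ∑ j, star (x j) * ∑ k, (t : ℂ) ^ (s j + conj (s k) - 1) • (f t : ℂ) * x k := by
        rw [← integral_complex_ofReal]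
        exact (setIntegral_congr_fun measurableSet_Ioi h_pointwise).symm
    _ = star x ⬝ᵥ (of (fun j k => mellin (fun t => (f t : ℂ)) (s j + conj (s k))) *ᵥ x) := by
        simp only [dotProduct, mulVec, of_apply, Pi.star_apply, mellin]
        rw [integral_finsetSum _ fun j _ => ?_]
        · refine Finset.sum_congr rfl fun j _ => ?_
          simp_rw [Finset.mul_sum]
          rw [integral_finsetSum _ fun k _ => h_int j k]
          refine Finset.sum_congr rfl fun k _ => ?_
          rw [← integral_mul_const, ← integral_const_mul]
        · simp_rw [Finset.mul_sum]
          exact integrable_finsetSum _ fun k _ => h_int j k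

namespace Matrix

variable {ι 𝕜 : Type*} [Fintype ι] [RCLike 𝕜]

theorem PosSemidef.hadamard_finsetProd {κ : Type*} (S : Finset κ) {A : κ → Matrix ι ι 𝕜}
    (hA : ∀ l ∈ S, (A l).PosSemidef) : (of fun i j => ∏ l ∈ S, A l i j).PosSemidef := by
  classical
  induction S using Finset.induction_on with
  | empty => simpa [vecMulVec] using posSemidef_vecMulVec_self_star (1 : ι → 𝕜)
  | insert l S hl ih =>
    simp_rw [Finset.prod_insert hl]
    exact (hA l (S.mem_insert_self l)).hadamard (ih fun l' hl' => hA l' (S.mem_insert_of_mem hl'))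

theorem PosSemidef.sum_apply_mul_mul_conj_nonneg {M : Matrix ι ι 𝕜} (hM : M.PosSemidef)
    (c : ι → 𝕜) : 0 ≤ ∑ j, ∑ k, M j k * c j * conj (c k) := by
  convert hM.dotProduct_mulVec_nonneg (star c) using 1
  simp only [dotProduct, mulVec, Finset.mul_sum, Pi.star_apply, RCLike.star_def, RCLike.conj_conj]
  exact Finset.sum_congr rfl fun j _ => Finset.sum_congr rfl fun k _ => by ring

end Matrix

lemma hasSum_alternating_hurwitzZeta {b : ℝ} (hb : b ∈ Icc 0 (1 / 2)) {s : ℂ} (hs : 1 < s.re) :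
    HasSum (fun k : ℕ => (-1 : ℂ) ^ k / ((k / 2 + b : ℝ) : ℂ) ^ s)
      (hurwitzZeta b s - hurwitzZeta ↑(b + 1 / 2) s) := by
  have h_even := hasSum_hurwitzZeta_of_one_lt_re ⟨hb.1, by linarith [hb.2]⟩ hs
  have h_odd := hasSum_hurwitzZeta_of_one_lt_re (a := b + 1 / 2)
    ⟨by linarith [hb.1], by linarith [hb.2]⟩ hs
  refine HasSum.even_add_odd (h_even.congr_fun fun n => ?_) (h_odd.neg.congr_fun fun n => ?_)
  · push_cast
    rw [pow_mul, neg_one_sq, one_pow]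
    ring_nf
  · push_cast
    rw [pow_succ, pow_mul, neg_one_sq, one_pow]
    ring_nf

lemma summable_one_div_nat_div_two_add_rpow {b σ : ℝ} (hb : 0 < b) (hσ : 1 < σ) :
    Summable fun k : ℕ => 1 / (k / 2 + b : ℝ) ^ σ := by
  have h := ((Real.summable_one_div_nat_add_rpow (2 * b) σ).mpr hσ).mul_left (2 ^ σ)
  refine h.congr fun k => ?_
  rw [abs_of_pos (by positivity), show (k / 2 + b : ℝ) = (k + 2 * b) / 2 by ring,
    Real.div_rpow (by positivity) (by norm_num)]
  field_simp

noncomputable def altHurwitzKernel (b t : ℝ) : ℝ :=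
  Real.exp (-b * t) / (1 + Real.exp (-t / 2))

namespace altHurwitzKernel

lemma pos (b t : ℝ) : 0 < altHurwitzKernel b t := by
  unfold altHurwitzKernel
  positivity

lemma le_exp (b t : ℝ) : altHurwitzKernel b t ≤ Real.exp (-b * t) :=
  div_le_self (Real.exp_pos _).le (by linarith [Real.exp_pos (-t / 2)])

lemma continuous (b : ℝ) : Continuous (altHurwitzKernel b) :=
  .div (by fun_prop) (by fun_prop) fun t => by positivity

lemma hasSum {b t : ℝ} (ht : 0 < t) :
    HasSum (fun k : ℕ => (-1 : ℂ) ^ k * ↑(Real.exp (-(k / 2 + b) * t)))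
      (altHurwitzKernel b t : ℂ) := by
  have hr : |-Real.exp (-t / 2)| < 1 := by
    rw [abs_neg, abs_of_pos (Real.exp_pos _), Real.exp_lt_one_iff]
    linarith
  have h_geom := (hasSum_geometric_of_abs_lt_one hr).mul_left (Real.exp (-b * t))
  rw [sub_neg_eq_add, ← div_eq_mul_inv] at h_geom
  have h_real : HasSum (fun k : ℕ => (-1 : ℝ) ^ k * Real.exp (-(k / 2 + b) * t))
      (altHurwitzKernel b t) := h_geom.congr_fun fun k => by
    rw [neg_pow (Real.exp _), ← Real.exp_nat_mul, mul_left_comm, ← Real.exp_add]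
    ring_nf
  exact_mod_cast Complex.hasSum_ofReal.mpr h_real

variable {b : ℝ}

lemma isBigO_atTop : (fun t => (altHurwitzKernel b t : ℂ)) =O[atTop] fun t => Real.exp (-b * t) :=
  .of_bound' <| .of_forall fun t => by
    rw [Complex.norm_real, Real.norm_of_nonneg (pos b t).le,
      Real.norm_of_nonneg (Real.exp_pos _).le]
    exact le_exp b t

lemma isBigO_nhdsGT_zero (hb : 0 ≤ b) :
    (fun t => (altHurwitzKernel b t : ℂ)) =O[𝓝[>] 0] (· ^ (-(0 : ℝ))) :=
  .of_bound' <| eventually_nhdsWithin_of_forall fun t (ht : 0 < t) => by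
    rw [Complex.norm_real, Real.norm_of_nonneg (pos b t).le, neg_zero, Real.rpow_zero, norm_one]
    exact (le_exp b t).trans (Real.exp_le_one_iff.mpr (by nlinarith))

lemma mellinConvergent (hb : 0 < b) {s : ℂ} (hs : 0 < s.re) :
    MellinConvergent (fun t => (altHurwitzKernel b t : ℂ)) s :=
  mellinConvergent_of_isBigO_rpow_exp hb
    ((continuous_ofReal.comp (continuous b)).locallyIntegrable.locallyIntegrableOn _)
    isBigO_atTop (isBigO_nhdsGT_zero hb.le) hs

lemma differentiableAt_mellin (hb : 0 < b) {s : ℂ} (hs : 0 < s.re) :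
    DifferentiableAt ℂ (mellin fun t => (altHurwitzKernel b t : ℂ)) s :=
  mellin_differentiableAt_of_isBigO_rpow_exp hb
    ((continuous_ofReal.comp (continuous b)).locallyIntegrable.locallyIntegrableOn _)
    isBigO_atTop (isBigO_nhdsGT_zero hb.le) hs

lemma mellin_eq_of_one_lt_re (hb : b ∈ Ioc 0 (1 / 2)) {s : ℂ} (hs : 1 < s.re) :
    mellin (fun t => (altHurwitzKernel b t : ℂ)) s =
      Gamma s * (hurwitzZeta b s - hurwitzZeta ↑(b + 1 / 2) s) := by
  have h_sum : Summable fun k : ℕ => ‖(-1 : ℂ) ^ k‖ / (k / 2 + b) ^ s.re := by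
    simpa using summable_one_div_nat_div_two_add_rpow hb.1 hs
  have h := hasSum_mellin (p := fun k : ℕ => k / 2 + b)
    (fun k => Or.inr (add_pos_of_nonneg_of_pos (by positivity) hb.1)) (by linarith)
    (fun t ht => hasSum ht) h_sum
  refine h.unique ?_
  simpa only [mul_div_assoc] using
    (hasSum_alternating_hurwitzZeta ⟨hb.1.le, hb.2⟩ hs).mul_left (Gamma s)

lemma mellin_eq (hb : b ∈ Ioc 0 (1 / 2)) {s : ℂ} (hs : 0 < s.re) :
    mellin (fun t => (altHurwitzKernel b t : ℂ)) s =
      Gamma s * (hurwitzZeta b s - hurwitzZeta ↑(b + 1 / 2) s) := by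
  let U : Set ℂ := {z | 0 < z.re}
  have hU : IsOpen U := isOpen_lt continuous_const continuous_re
  have h_mellin : AnalyticOnNhd ℂ (mellin fun t => (altHurwitzKernel b t : ℂ)) U :=
    DifferentiableOn.analyticOnNhd
      (fun z hz => (differentiableAt_mellin hb.1 hz).differentiableWithinAt) hU
  have h_zeta : AnalyticOnNhd ℂ
      (fun z => Gamma z * (hurwitzZeta b z - hurwitzZeta ↑(b + 1 / 2) z)) U := by
    refine DifferentiableOn.analyticOnNhd (fun z (hz : 0 < z.re) => ?_) hU
    refine DifferentiableAt.differentiableWithinAt <| .mul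
      (differentiableAt_Gamma z fun m hm => ?_)
      (differentiable_hurwitzZeta_sub_hurwitzZeta _ _ z)
    rw [hm, neg_re, natCast_re] at hz
    linarith [m.cast_nonneg (α := ℝ)]
  have h_eventually : (mellin fun t => (altHurwitzKernel b t : ℂ)) =ᶠ[𝓝 2]
      fun z => Gamma z * (hurwitzZeta b z - hurwitzZeta ↑(b + 1 / 2) z) := by
    filter_upwards [(isOpen_lt continuous_const continuous_re).mem_nhds
      (show (1 : ℝ) < (2 : ℂ).re by norm_num)] with z hz
    exact mellin_eq_of_one_lt_re hb hz
  exact h_mellin.eqOn_of_preconnected_of_eventuallyEq h_zeta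
    (convex_halfSpace_re_gt 0).isPreconnected (by norm_num [U]) h_eventually hs

end altHurwitzKernel

theorem gamma_hurwitzZeta_diff_matrix_posSemidef_general (m n : ℕ) (a : Fin m → ℝ)
    (ha0 : ∀ l, 0 < a l) (ha1 : ∀ l, a l ≤ 1)
    (s : Fin n → Fin m → ℂ) (hs : ∀ j l, 0 < (s j l).re) :
    ∀ c : Fin n → ℂ,
      0 ≤ ∑ j : Fin n, ∑ k : Fin n,
        (∏ l : Fin m,
            Complex.Gamma (s j l + (starRingEnd ℂ) (s k l))
              * (HurwitzZeta.hurwitzZeta (↑((a l + 1) / 4) : UnitAddCircle)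
                    (s j l + (starRingEnd ℂ) (s k l))
                - HurwitzZeta.hurwitzZeta (↑((a l + 3) / 4) : UnitAddCircle)
                    (s j l + (starRingEnd ℂ) (s k l))))
          * c j * (starRingEnd ℂ) (c k) := by
  intro c
  have h_factor : ∀ l, (Matrix.of fun j k => Gamma (s j l + conj (s k l)) *
      (hurwitzZeta ↑((a l + 1) / 4) (s j l + conj (s k l)) -
        hurwitzZeta ↑((a l + 3) / 4) (s j l + conj (s k l)))).PosSemidef := by
    intro l
    have hb : (a l + 1) / 4 ∈ Ioc 0 (1 / 2) := ⟨by linarith [ha0 l], by linarith [ha1 l]⟩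
    have hw : ∀ j k, 0 < (s j l + conj (s k l)).re := fun j k => by
      simpa using add_pos (hs j l) (hs k l)
    convert posSemidef_mellin_add_conj (fun t _ => (altHurwitzKernel.pos _ t).le) (s · l)
      fun j k => altHurwitzKernel.mellinConvergent hb.1 (hw j k) using 1
    refine congrArg Matrix.of (funext₂ fun j k => ?_)
    rw [altHurwitzKernel.mellin_eq hb (hw j k), show (a l + 3) / 4 = (a l + 1) / 4 + 1 / 2 by ring]
  simpa only [Matrix.of_apply] using (Matrix.PosSemidef.hadamard_finsetProd Finset.univ
    fun l _ => h_factor l).sum_apply_mul_mul_conj_nonneg c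

/-- For real `0 < a_ℓ ≤ 1` and `s_{j,ℓ} ∈ ℂ` with `Re(s_{j,ℓ}) > 0` and
`w_{jk,ℓ} := s_{j,ℓ} + conj s_{k,ℓ} ≠ 1`, the matrix with `(j,k)` entry
`∏_ℓ Γ(w_{jk,ℓ}) (ζ(w_{jk,ℓ}, (a_ℓ+1)/4) - ζ(w_{jk,ℓ}, (a_ℓ+3)/4))` is positive
semidefinite, where `ζ(s, a)` is the Hurwitz zeta function. -/
theorem gamma_hurwitzZeta_diff_matrix_posSemidef (m n : ℕ) (a : Fin m → ℝ)
    (ha0 : ∀ l, 0 < a l) (ha1 : ∀ l, a l ≤ 1)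
    (s : Fin n → Fin m → ℂ) (hs : ∀ j l, 0 < (s j l).re)
    (hne : ∀ j k l, s j l + (starRingEnd ℂ) (s k l) ≠ 1) :
    ∀ c : Fin n → ℂ,
      0 ≤ ∑ j : Fin n, ∑ k : Fin n,
        (∏ l : Fin m,
            Complex.Gamma (s j l + (starRingEnd ℂ) (s k l))
              * (HurwitzZeta.hurwitzZeta (↑((a l + 1) / 4) : UnitAddCircle)
                    (s j l + (starRingEnd ℂ) (s k l))
                - HurwitzZeta.hurwitzZeta (↑((a l + 3) / 4) : UnitAddCircle)
                    (s j l + (starRingEnd ℂ) (s k l))))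
          * c j * (starRingEnd ℂ) (c k) :=
  gamma_hurwitzZeta_diff_matrix_posSemidef_general m n a ha0 ha1 s hs
end
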